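/- arXiv:0711.2737 — 7 statements merged into one kernel-verified Lean document; each statement's English description precedes it below -/
import Mathlib

section
/- Let K be a field and R a Noetherian commutative ℕ-graded K-algebra which is an integral domain with R₀ = K·1. Let f₁,…,f_n ∈ R be homogeneous elements of positive degree which are algebraically independent over K, let A := K[f₁,…,f_n] ⊆ R, and let g₁,…,g_m ∈ R be homogeneous elements such that R is a free A-module with basis g₁,…,g_m. Then every homogeneous component R_d is finite-dimensional over K and the Hilbert series of R satisfies, as an identity of formal power series over ℤ, (Σ_{d≥0} dim_K(R_d)·t^d) · Π_{j=1}^{n} (1 − t^{deg(f_j)}) = t^{deg(g₁)} + … + t^{deg(g_m)}. -/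
/-!
The products `f^α · gᵢ` (`α ∈ ℕⁿ`) form a homogeneous `K`-basis of `R`, of degrees
`∑ⱼ αⱼ deg fⱼ + deg gᵢ`. So `dim_K R_d` counts the pairs `(α, i)` of degree `d`, which are
finitely many because every `deg fⱼ > 0`, and the counting series factors as
`(∑ᵢ t^{deg gᵢ}) · ∏ⱼ 1 / (1 - t^{deg fⱼ})`.
-/

open PowerSeries Finset

/-- An infinite fibre contributes the junk value `Nat.card = 0`, hence the finiteness
hypotheses below. -/
noncomputable def degreeSeries {ι : Type*} (σ : ι → ℕ) : PowerSeries ℤ :=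
  mk fun d => (Nat.card (σ ⁻¹' {d}) : ℤ)

section DegreeSeries

variable {ι κ : Type*}

lemma coeff_degreeSeries (σ : ι → ℕ) (d : ℕ) :
    coeff d (degreeSeries σ) = Nat.card (σ ⁻¹' {d}) :=
  coeff_mk _ _

lemma degreeSeries_comp_equiv (σ : ι → ℕ) (e : κ ≃ ι) :
    degreeSeries (σ ∘ e) = degreeSeries σ := by
  ext d
  simp only [coeff_degreeSeries]
  exact congrArg _ (Nat.card_congr (e.subtypeEquiv fun _ => Iff.rfl))

variable (σ : ι → ℕ) (τ : κ → ℕ)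

def preimageAddEquiv (d : ℕ) :
    (fun p : ι × κ => σ p.1 + τ p.2) ⁻¹' {d} ≃
      Σ x : antidiagonal d, ↥(σ ⁻¹' {x.1.1}) × ↥(τ ⁻¹' {x.1.2}) where
  toFun p := ⟨⟨(σ p.1.1, τ p.1.2), mem_antidiagonal.2 p.2⟩, ⟨p.1.1, rfl⟩, ⟨p.1.2, rfl⟩⟩
  invFun q := ⟨(q.2.1, q.2.2), by
    obtain ⟨⟨⟨a, b⟩, h⟩, ⟨i, hi⟩, ⟨k, hk⟩⟩ := q
    change σ i = a at hi
    change τ k = b at hk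
    subst hi hk
    exact mem_antidiagonal.1 h⟩
  left_inv _ := rfl
  right_inv := by
    rintro ⟨⟨⟨a, b⟩, h⟩, ⟨i, hi⟩, ⟨k, hk⟩⟩
    change σ i = a at hi
    change τ k = b at hk
    subst hi hk
    rfl

variable {σ τ}

lemma finite_preimage_add (hσ : ∀ d, (σ ⁻¹' {d}).Finite) (hτ : ∀ d, (τ ⁻¹' {d}).Finite)
    (d : ℕ) :
    ((fun p : ι × κ => σ p.1 + τ p.2) ⁻¹' {d}).Finite := by
  have := fun d => (hσ d).to_subtype
  have := fun d => (hτ d).to_subtype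
  exact Set.finite_coe_iff.mp (Finite.of_equiv _ (preimageAddEquiv σ τ d).symm)

lemma degreeSeries_add (hσ : ∀ d, (σ ⁻¹' {d}).Finite) (hτ : ∀ d, (τ ⁻¹' {d}).Finite) :
    degreeSeries (fun p : ι × κ => σ p.1 + τ p.2) = degreeSeries σ * degreeSeries τ := by
  have := fun d => (hσ d).to_subtype
  have := fun d => (hτ d).to_subtype
  ext d
  rw [coeff_mul, coeff_degreeSeries, Nat.card_congr (preimageAddEquiv σ τ d), Nat.card_sigma]
  simp only [coeff_degreeSeries, Nat.card_prod, Nat.cast_sum, Nat.cast_mul]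
  exact Finset.sum_coe_sort (antidiagonal d) fun x =>
    (Nat.card (σ ⁻¹' {x.1}) : ℤ) * Nat.card (τ ⁻¹' {x.2})

end DegreeSeries

lemma degreeSeries_eq_sum_X_pow {ι : Type*} [Fintype ι] (σ : ι → ℕ) :
    degreeSeries σ = ∑ i, X ^ σ i := by
  classical
  ext d
  simp [coeff_degreeSeries, coeff_X_pow, Nat.card_eq_fintype_card, Fintype.card_subtype,
    Finset.sum_boole, eq_comm]

lemma card_preimage_mul_right {w : ℕ} (hw : 0 < w) (d : ℕ) :
    Nat.card ((· * w) ⁻¹' {d}) = if w ∣ d then 1 else 0 := by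
  split_ifs with h
  · obtain ⟨c, rfl⟩ := h
    have : (· * w) ⁻¹' {w * c} = {c} := by
      ext a
      simp [mul_comm w, Nat.mul_left_inj hw.ne']
    rw [this, Nat.card_unique]
  · exact Nat.card_eq_zero.2 <| Or.inl ⟨fun ⟨a, ha⟩ => h ⟨a, by rw [← ha, mul_comm]⟩⟩

lemma degreeSeries_mul_right_mul_one_sub {w : ℕ} (hw : 0 < w) :
    degreeSeries (· * w) * (1 - X ^ w) = 1 := by
  ext d
  rw [mul_sub, mul_one, map_sub, coeff_mul_X_pow', coeff_degreeSeries, coeff_degreeSeries,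
    card_preimage_mul_right hw, card_preimage_mul_right hw, coeff_one]
  rcases Nat.eq_zero_or_pos d with rfl | hd
  · simp [hw.not_ge]
  · by_cases hwd : w ≤ d
    · have : w ∣ d ∨ d ≤ w ↔ w ∣ d :=
        ⟨fun h => h.elim id fun h' => le_antisymm h' hwd ▸ dvd_rfl, Or.inl⟩
      simp [hwd, hd.ne', Nat.dvd_sub_self_right, this]
    · simp [hwd, hd.ne', Nat.not_dvd_of_pos_of_lt hd (not_le.mp hwd)]

lemma Finsupp.weight_cons {n : ℕ} (w : Fin (n + 1) → ℕ) (a : ℕ) (s : Fin n →₀ ℕ) :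
    Finsupp.weight w (Finsupp.cons a s) = a * w 0 + Finsupp.weight (Fin.tail w) s := by
  simp [Finsupp.weight_eq_sum, Fin.sum_univ_succ, Finsupp.cons_zero, Finsupp.cons_succ,
    Fin.tail]

lemma degreeSeries_weight_mul_prod {n : ℕ} (w : Fin n → ℕ) (hw : ∀ j, 0 < w j) :
    degreeSeries (Finsupp.weight (R := ℕ) w) * ∏ j, (1 - X ^ w j) = 1 := by
  induction n with
  | zero =>
    ext d
    rw [Finset.univ_eq_empty, Finset.prod_empty, mul_one, coeff_degreeSeries, coeff_one]
    rcases eq_or_ne d 0 with rfl | hd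
    · have : Finsupp.weight (R := ℕ) w ⁻¹' {0} = Set.univ := by
        ext x
        simp [Subsingleton.elim x 0]
      simp [this]
    · have : Finsupp.weight (R := ℕ) w ⁻¹' {d} = ∅ := by
        ext x
        simp [Subsingleton.elim x 0, hd.symm]
      simp [this, hd]
  | succ n ih =>
    let e : ℕ × (Fin n →₀ ℕ) ≃ (Fin (n + 1) →₀ ℕ) :=
      ⟨fun p => Finsupp.cons p.1 p.2, fun t => (t 0, Finsupp.tail t),
        fun p => by simp [Finsupp.cons_zero, Finsupp.tail_cons], Finsupp.cons_tail⟩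
    have hsplit : Finsupp.weight (R := ℕ) w ∘ e =
        fun p => p.1 * w 0 + Finsupp.weight (Fin.tail w) p.2 :=
      funext fun p => Finsupp.weight_cons w p.1 p.2
    have hfin₀ : ∀ d, ((· * w 0) ⁻¹' {d}).Finite := fun d =>
      Set.Subsingleton.finite fun a ha b hb =>
        Nat.eq_of_mul_eq_mul_right (hw 0) (ha.trans hb.symm)
    have hfin : ∀ d, (Finsupp.weight (R := ℕ) (Fin.tail w) ⁻¹' {d}).Finite := fun d =>
      Finsupp.finite_of_nat_weight_eq (Fin.tail w) (fun j => (hw j.succ).ne') d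
    calc degreeSeries (Finsupp.weight (R := ℕ) w) * ∏ j, (1 - X ^ w j)
        = degreeSeries (Finsupp.weight (R := ℕ) w ∘ e) *
            ((1 - X ^ w 0) * ∏ j, (1 - X ^ Fin.tail w j)) := by
          rw [degreeSeries_comp_equiv, Fin.prod_univ_succ]; rfl
      _ = (degreeSeries (· * w 0) * (1 - X ^ w 0)) *
            (degreeSeries (Finsupp.weight (R := ℕ) (Fin.tail w)) *
              ∏ j, (1 - X ^ Fin.tail w j)) := by
          rw [hsplit, degreeSeries_add hfin₀ hfin]; ring
      _ = 1 := by
          rw [degreeSeries_mul_right_mul_one_sub (hw 0), ih (Fin.tail w) fun j => hw j.succ,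
            one_mul]

lemma finsuppProd_pow_mem_graded {ι κ A S : Type*} [SetLike S A] [CommMonoid A]
    [AddCommMonoid ι] (𝒜 : ι → S) [SetLike.GradedMonoid 𝒜] {f : κ → A} {df : κ → ι}
    (hf : ∀ j, f j ∈ 𝒜 (df j)) (α : κ →₀ ℕ) :
    α.prod (fun j k => f j ^ k) ∈ 𝒜 (Finsupp.weight df α) :=
  SetLike.prod_pow_mem_graded 𝒜 df f α fun j _ => hf j

section HomogeneousBasis

variable {ι κ R M : Type*} [DecidableEq ι]

lemma span_basis_preimage_eq [Semiring R] [AddCommMonoid M] [Module R M]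
    (𝒜 : ι → Submodule R M) [DirectSum.Decomposition 𝒜]
    {v : Module.Basis κ R M} {σ : κ → ι} (hv : ∀ k, v k ∈ 𝒜 (σ k)) (i : ι) :
    Submodule.span R (v '' (σ ⁻¹' {i})) = 𝒜 i := by
  refine le_antisymm (Submodule.span_le.2 ?_) fun x hx => ?_
  · rintro _ ⟨k, rfl, rfl⟩
    exact hv k
  let π : M →ₗ[R] M := (𝒜 i).subtype ∘ₗ DirectSum.component R ι (fun i => 𝒜 i) i ∘ₗ
    (DirectSum.decomposeLinearEquiv 𝒜).toLinearMap
  have hπ : (Submodule.span R (Set.range v)).map π ≤ Submodule.span R (v '' (σ ⁻¹' {i})) := by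
    rw [Submodule.map_span_le]
    rintro _ ⟨k, rfl⟩
    by_cases hk : σ k = i
    · have : π (v k) = v k := DirectSum.decompose_of_mem_same 𝒜 (hk ▸ hv k)
      rw [this]
      exact Submodule.subset_span ⟨k, hk, rfl⟩
    · have : π (v k) = 0 := DirectSum.decompose_of_mem_ne 𝒜 (hv k) hk
      rw [this]
      exact Submodule.zero_mem _
  have : π x = x := DirectSum.decompose_of_mem_same 𝒜 hx
  exact this ▸ hπ ⟨x, v.mem_span x, rfl⟩

noncomputable def homogeneousComponentBasis [Ring R] [AddCommGroup M] [Module R M]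
    (𝒜 : ι → Submodule R M) [DirectSum.Decomposition 𝒜]
    {v : Module.Basis κ R M} {σ : κ → ι} (hv : ∀ k, v k ∈ 𝒜 (σ k)) (i : ι) :
    Module.Basis (σ ⁻¹' {i}) R (𝒜 i) :=
  (Module.Basis.span (v.linearIndependent.comp _ Subtype.val_injective)).map
    (LinearEquiv.ofEq _ _ <| by
      rw [Set.range_comp, Subtype.range_coe, span_basis_preimage_eq 𝒜 hv])

end HomogeneousBasis

theorem stmt3_general {K R : Type*} [Field K] [CommRing R] [Algebra K R]
    (𝒜 : ℕ → Submodule K R) [GradedAlgebra 𝒜]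
    {n : ℕ} (f : Fin n → R) (df : Fin n → ℕ)
    (hf : ∀ j, f j ∈ 𝒜 (df j)) (hdf : ∀ j, 0 < df j)
    (hind : AlgebraicIndependent K f)
    {m : ℕ} (g : Fin m → R) (dg : Fin m → ℕ) (hg : ∀ i, g i ∈ 𝒜 (dg i))
    (b : Module.Basis (Fin m) (Algebra.adjoin K (Set.range f)) R) (hb : ∀ i, b i = g i) :
    (∀ d : ℕ, FiniteDimensional K (𝒜 d)) ∧
    (PowerSeries.mk fun d => (Module.finrank K (𝒜 d) : ℤ)) *
        ∏ j : Fin n, (1 - (PowerSeries.X : PowerSeries ℤ) ^ df j) =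
      ∑ i : Fin m, (PowerSeries.X : PowerSeries ℤ) ^ dg i := by
  let v : Module.Basis ((Fin n →₀ ℕ) × Fin m) K R :=
    ((MvPolynomial.basisMonomials (Fin n) K).map hind.aevalEquiv.toLinearEquiv).smulTower b
  let σ : (Fin n →₀ ℕ) × Fin m → ℕ := fun p => Finsupp.weight df p.1 + dg p.2
  have hv : ∀ p, v p ∈ 𝒜 (σ p) := by
    rintro ⟨α, i⟩
    have : v (α, i) = α.prod (fun j k => f j ^ k) * g i := by
      simp [v, Module.Basis.smulTower_apply, Algebra.smul_def, hb, MvPolynomial.aeval_monomial]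
    exact this ▸ SetLike.mul_mem_graded (finsuppProd_pow_mem_graded 𝒜 hf α) (hg i)
  have hfin_weight : ∀ d, (Finsupp.weight (R := ℕ) df ⁻¹' {d}).Finite :=
    Finsupp.finite_of_nat_weight_eq df fun j => (hdf j).ne'
  have hfin : ∀ d, (σ ⁻¹' {d}).Finite :=
    finite_preimage_add hfin_weight fun d => Set.toFinite _
  have : ∀ d, Finite (σ ⁻¹' {d}) := fun d => (hfin d).to_subtype
  let B := homogeneousComponentBasis 𝒜 hv
  refine ⟨fun d => Module.Finite.of_basis (B d), ?_⟩
  have hilbert : PowerSeries.mk (fun d => (Module.finrank K (𝒜 d) : ℤ)) = degreeSeries σ := by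
    ext d
    rw [coeff_mk, coeff_degreeSeries, Module.finrank_eq_nat_card_basis (B d)]
  rw [hilbert, degreeSeries_add hfin_weight fun d => Set.toFinite _, degreeSeries_eq_sum_X_pow dg,
    mul_right_comm, degreeSeries_weight_mul_prod df hdf, one_mul]

/-- In the setting of a Noetherian connected graded domain `R` over a field
`K` which is a free module with homogeneous basis `g₁,…,g_m` over the subalgebra generated by
algebraically independent homogeneous elements `f₁,…,f_n` of positive degree, every homogeneous
component `R_d` is finite-dimensional and the Hilbert series satisfies
`(Σ_d dim_K R_d · t^d) · Π_j (1 − t^{deg f_j}) = t^{deg g₁} + … + t^{deg g_m}` in `ℤ⟦t⟧`. -/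
theorem stmt3 {K R : Type*} [Field K] [CommRing R] [Algebra K R]
    [IsNoetherianRing R] [IsDomain R]
    (𝒜 : ℕ → Submodule K R) [GradedAlgebra 𝒜] (h0 : 𝒜 0 = 1)
    {n : ℕ} (f : Fin n → R) (df : Fin n → ℕ)
    (hf : ∀ j, f j ∈ 𝒜 (df j)) (hdf : ∀ j, 0 < df j)
    (hind : AlgebraicIndependent K f)
    {m : ℕ} (g : Fin m → R) (dg : Fin m → ℕ) (hg : ∀ i, g i ∈ 𝒜 (dg i))
    (b : Module.Basis (Fin m) (Algebra.adjoin K (Set.range f)) R) (hb : ∀ i, b i = g i) :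
    (∀ d : ℕ, FiniteDimensional K (𝒜 d)) ∧
    (PowerSeries.mk fun d => (Module.finrank K (𝒜 d) : ℤ)) *
        ∏ j : Fin n, (1 - (PowerSeries.X : PowerSeries ℤ) ^ df j) =
      ∑ i : Fin m, (PowerSeries.X : PowerSeries ℤ) ^ dg i :=
  stmt3_general 𝒜 f df hf hdf hind g dg hg b hb
end

section
/- Let K be a field and R a Noetherian commutative ℕ-graded K-algebra which is an integral domain with R₀ = K·1. Let f₁,…,f_k ∈ R be homogeneous elements of positive degree and let p₁,…,p_k ≥ 1 be integers. Then f₁,…,f_k is a regular sequence in R if and only if f₁^{p₁},…,f_k^{p_k} is a regular sequence in R. -/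
/-!
Regularity is tested one element at a time, modulo the ideal generated by the earlier ones, and
`a` is a non-zero-divisor modulo an ideal iff `aⁿ` is; so a power can be taken freely in the last
position of a sequence. Homogeneous elements of positive degree can be moved there: if `a, b` is
regular modulo a homogeneous ideal `I`, then `b` is regular modulo `I` by the graded Nakayama
lemma applied to the colon ideal `I : b`, and `a` is regular modulo `I + (b)` by direct
computation. Properness of the two ideals is equivalent because they have the same radical.
-/

/-- A sequence `f 0, …, f (r-1)` of elements of a commutative ring is a regular sequence:
the ideal it generates is proper, and for each `i` the image of `f i` is a non-zero-divisor
modulo the ideal generated by the previous elements. -/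
def IsRegSeq {S : Type*} [CommRing S] {r : ℕ} (f : Fin r → S) : Prop :=
  Ideal.span (Set.range f) ≠ ⊤ ∧
    ∀ (i : Fin r) (g : S),
      g * f i ∈ Ideal.span (f '' {j : Fin r | j < i}) →
        g ∈ Ideal.span (f '' {j : Fin r | j < i})

theorem Fin.image_setOf_lt_succ {α : Type*} {k : ℕ} (f : Fin (k + 1) → α) (i : Fin k) :
    f '' {j | j < i.succ} = insert (f 0) ((fun j => f j.succ) '' {j | j < i}) := by
  ext x
  simp [Fin.exists_fin_succ, Fin.succ_pos, eq_comm]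

section

open Ideal

theorem Ideal.span_range_pow_eq_top_iff {S ι : Type*} [CommSemiring S] (f : ι → S) {p : ι → ℕ}
    (hp : ∀ i, 0 < p i) : span (Set.range fun i => f i ^ p i) = ⊤ ↔ span (Set.range f) = ⊤ := by
  constructor
  · intro h
    refine top_le_iff.1 (h ▸ span_le.2 ?_)
    rintro _ ⟨i, rfl⟩
    exact pow_mem_of_mem _ (subset_span (Set.mem_range_self i)) _ (hp i)
  · intro h
    rw [← radical_eq_top, eq_top_iff, ← h, span_le]
    rintro _ ⟨i, rfl⟩
    exact mem_radical_iff.2 ⟨p i, subset_span ⟨i, rfl⟩⟩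

variable {R : Type*} [CommRing R]

theorem Ideal.isSMulRegular_quotient_iff {I : Ideal R} {a : R} :
    IsSMulRegular (R ⧸ I) a ↔ ∀ x, a * x ∈ I → x ∈ I :=
  isSMulRegular_quotient_iff_mem_of_smul_mem I a

theorem IsSMulRegular.quotient_span_singleton_sup_swap {I : Ideal R} {a b : R}
    (ha : IsSMulRegular (R ⧸ I) a) (hb : IsSMulRegular (R ⧸ (span {a} ⊔ I)) b) :
    IsSMulRegular (R ⧸ (span {b} ⊔ I)) a := by
  rw [isSMulRegular_quotient_iff] at *
  intro g hg
  obtain ⟨t, x, hx, hgt⟩ := mem_span_singleton_sup.1 hg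
  have ht : b * t ∈ span {a} ⊔ I :=
    mem_span_singleton_sup.2 ⟨g, -x, neg_mem hx, by linear_combination -hgt⟩
  obtain ⟨s, x', hx', hts⟩ := mem_span_singleton_sup.1 (hb t ht)
  have hgs : g - s * b ∈ I := by
    refine ha _ ?_
    have : a * (g - s * b) = x + b * x' := by linear_combination -hgt - b * hts
    exact this ▸ add_mem hx (mul_mem_left _ _ hx')
  exact mem_span_singleton_sup.2 ⟨s, _, hgs, by ring⟩

/-- Weak regularity of `L` on `R ⧸ I`, with every quotient taken in `R`, so that only the ideal
changes along the list. -/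
def IsWeaklyRegularMod : Ideal R → List R → Prop
  | _, [] => True
  | I, a :: L => IsSMulRegular (R ⧸ I) a ∧ IsWeaklyRegularMod (span {a} ⊔ I) L

@[simp]
theorem isWeaklyRegularMod_nil (I : Ideal R) : IsWeaklyRegularMod I [] := trivial

@[simp]
theorem isWeaklyRegularMod_cons (I : Ideal R) (a : R) (L : List R) :
    IsWeaklyRegularMod I (a :: L) ↔
      IsSMulRegular (R ⧸ I) a ∧ IsWeaklyRegularMod (span {a} ⊔ I) L :=
  Iff.rfl

theorem isWeaklyRegularMod_append_pow {a : R} {n : ℕ} (hn : 0 < n) (L : List R) (I : Ideal R) :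
    IsWeaklyRegularMod I (L ++ [a ^ n]) ↔ IsWeaklyRegularMod I (L ++ [a]) := by
  induction L generalizing I with
  | nil => simp [IsSMulRegular.pow_iff hn]
  | cons b L ih => simp [ih]

theorem isWeaklyRegularMod_ofFn_iff {k : ℕ} (f : Fin k → R) (I : Ideal R) :
    IsWeaklyRegularMod I (List.ofFn f) ↔
      ∀ i, IsSMulRegular (R ⧸ (span (f '' {j | j < i}) ⊔ I)) (f i) := by
  induction k generalizing I with
  | zero => simp
  | succ k ih =>
    rw [List.ofFn_succ, isWeaklyRegularMod_cons, ih, Fin.forall_fin_succ]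
    refine and_congr ?_ (forall_congr' fun i => ?_)
    · rw [show f '' {j | j < 0} = ∅ by simp, span_empty, bot_sup_eq]
    · rw [Fin.image_setOf_lt_succ, span_insert, sup_assoc, sup_left_comm]

theorem isRegSeq_iff_isWeaklyRegularMod_bot {k : ℕ} (f : Fin k → R) :
    IsRegSeq f ↔ span (Set.range f) ≠ ⊤ ∧ IsWeaklyRegularMod ⊥ (List.ofFn f) := by
  rw [isWeaklyRegularMod_ofFn_iff]
  refine and_congr_right' (forall_congr' fun i => ?_)
  rw [sup_bot_eq, isSMulRegular_quotient_iff]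
  exact forall_congr' fun g => by rw [mul_comm]

section Graded

open DirectSum

variable {σ : Type*} [SetLike σ R] [AddSubgroupClass σ R] {𝒜 : ℕ → σ} [GradedRing 𝒜]

theorem Ideal.IsHomogeneous.span_singleton_sup {I : Ideal R} (hI : I.IsHomogeneous 𝒜) {a : R}
    {d : ℕ} (ha : a ∈ 𝒜 d) : (span {a} ⊔ I).IsHomogeneous 𝒜 :=
  (homogeneous_span 𝒜 {a} fun _ hx => ⟨d, Set.mem_singleton_iff.1 hx ▸ ha⟩).sup hI

/-- Graded Nakayama lemma: the degree-`n` component of `a * z` comes from the component of `z`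
of the smaller degree `n - d`. -/
theorem Ideal.IsHomogeneous.le_of_le_span_singleton_mul_sup {I J : Ideal R}
    (hI : I.IsHomogeneous 𝒜) {a : R} {d : ℕ} (ha : a ∈ 𝒜 d)
    (hd : 0 < d) (h : J ≤ span {a} * J ⊔ I) : J ≤ I := by
  suffices hcomp : ∀ n, ∀ g ∈ J, (decompose 𝒜 g n : R) ∈ I from
    fun g hg => hI.mem_iff.2 fun n => hcomp n g hg
  intro n
  induction n using Nat.strong_induction_on with
  | _ n ih =>
    intro g hg
    obtain ⟨y, hy, x, hx, rfl⟩ := Submodule.mem_sup.1 (h hg)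
    obtain ⟨z, hz, rfl⟩ := mem_span_singleton_mul.1 hy
    rw [decompose_add, DirectSum.add_apply, AddMemClass.coe_add]
    refine add_mem ?_ (hI n hx)
    by_cases hdn : d ≤ n
    · rw [coe_decompose_mul_of_left_mem_of_le 𝒜 ha hdn]
      exact mul_mem_left _ _ (ih _ (by omega) z hz)
    · rw [coe_decompose_mul_of_left_mem_of_not_le 𝒜 ha hdn]
      exact zero_mem _

theorem IsSMulRegular.quotient_of_quotient_span_singleton_sup {I : Ideal R}
    (hI : I.IsHomogeneous 𝒜) {a b : R} {d : ℕ} (ha : a ∈ 𝒜 d) (hd : 0 < d)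
    (hra : IsSMulRegular (R ⧸ I) a) (hrb : IsSMulRegular (R ⧸ (span {a} ⊔ I)) b) :
    IsSMulRegular (R ⧸ I) b := by
  rw [isSMulRegular_quotient_iff] at *
  have hcolon : I.colon (span {b}) ≤ I := by
    refine hI.le_of_le_span_singleton_mul_sup ha hd fun g hg => ?_
    rw [mem_colon_span_singleton] at hg
    obtain ⟨t, x, hx, rfl⟩ :=
      mem_span_singleton_sup.1 (hrb g (mem_sup_right (by rwa [mul_comm])))
    have ht : t * b ∈ I := hra _ <| by
      have : a * (t * b) = (t * a + x) * b - x * b := by ring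
      exact this ▸ sub_mem hg (mul_mem_right _ _ hx)
    exact Submodule.mem_sup.2
      ⟨a * t, mem_span_singleton_mul.2 ⟨t, mem_colon_span_singleton.2 ht, rfl⟩, x, hx, by ring⟩
  exact fun g hg => hcolon (mem_colon_span_singleton.2 (by rwa [mul_comm]))

theorem isWeaklyRegularMod_cons_cons_comm {I : Ideal R} (hI : I.IsHomogeneous 𝒜) {a b : R}
    {d e : ℕ} (ha : a ∈ 𝒜 d) (hd : 0 < d) (hb : b ∈ 𝒜 e) (he : 0 < e) (L : List R) :
    IsWeaklyRegularMod I (a :: b :: L) ↔ IsWeaklyRegularMod I (b :: a :: L) := by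
  simp only [isWeaklyRegularMod_cons, sup_left_comm (span {a})]
  constructor
  · rintro ⟨hra, hrb, hL⟩
    exact ⟨hra.quotient_of_quotient_span_singleton_sup hI ha hd hrb,
      hra.quotient_span_singleton_sup_swap hrb, hL⟩
  · rintro ⟨hrb, hra, hL⟩
    exact ⟨hrb.quotient_of_quotient_span_singleton_sup hI hb he hra,
      hrb.quotient_span_singleton_sup_swap hra, hL⟩

theorem isWeaklyRegularMod_cons_iff_concat {a : R} {d : ℕ} (ha : a ∈ 𝒜 d) (hd : 0 < d)
    {L : List R} (hL : ∀ x ∈ L, ∃ e, 0 < e ∧ x ∈ 𝒜 e) {I : Ideal R} (hI : I.IsHomogeneous 𝒜) :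
    IsWeaklyRegularMod I (a :: L) ↔ IsWeaklyRegularMod I (L ++ [a]) := by
  induction L generalizing I with
  | nil => rfl
  | cons b L ih =>
    obtain ⟨e, he, hb⟩ := hL b List.mem_cons_self
    rw [isWeaklyRegularMod_cons_cons_comm hI ha hd hb he, List.cons_append]
    exact and_congr_right'
      (ih (fun x hx => hL x (List.mem_cons_of_mem b hx)) (hI.span_singleton_sup hb))

theorem isWeaklyRegularMod_cons_pow {a : R} {d : ℕ} (ha : a ∈ 𝒜 d) (hd : 0 < d) {n : ℕ}
    (hn : 0 < n) {L : List R} (hL : ∀ x ∈ L, ∃ e, 0 < e ∧ x ∈ 𝒜 e) {I : Ideal R}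
    (hI : I.IsHomogeneous 𝒜) :
    IsWeaklyRegularMod I (a ^ n :: L) ↔ IsWeaklyRegularMod I (a :: L) := by
  rw [isWeaklyRegularMod_cons_iff_concat (SetLike.pow_mem_graded n ha) (smul_pos hn hd) hL hI,
    isWeaklyRegularMod_cons_iff_concat ha hd hL hI, isWeaklyRegularMod_append_pow hn]

theorem isWeaklyRegularMod_ofFn_pow {k : ℕ} {f : Fin k → R} {d : Fin k → ℕ}
    (hf : ∀ i, f i ∈ 𝒜 (d i)) (hd : ∀ i, 0 < d i) {p : Fin k → ℕ} (hp : ∀ i, 0 < p i)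
    {I : Ideal R} (hI : I.IsHomogeneous 𝒜) :
    IsWeaklyRegularMod I (List.ofFn fun i => f i ^ p i) ↔ IsWeaklyRegularMod I (List.ofFn f) := by
  induction k generalizing I with
  | zero => rfl
  | succ k ih =>
    have hL : ∀ x ∈ List.ofFn fun i : Fin k => f i.succ ^ p i.succ, ∃ e, 0 < e ∧ x ∈ 𝒜 e := by
      simp only [List.mem_ofFn, forall_exists_index]
      rintro _ i rfl
      exact ⟨p i.succ • d i.succ, smul_pos (hp _) (hd _), SetLike.pow_mem_graded _ (hf i.succ)⟩
    rw [List.ofFn_succ, List.ofFn_succ, isWeaklyRegularMod_cons_pow (hf 0) (hd 0) (hp 0) hL hI]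
    exact and_congr_right' (ih (fun i => hf i.succ) (fun i => hd i.succ) (fun i => hp i.succ)
      (hI.span_singleton_sup (hf 0)))

end Graded

end

theorem stmt6_general {K R : Type*} [Field K] [CommRing R] [Algebra K R]
    (𝒜 : ℕ → Submodule K R) [GradedAlgebra 𝒜]
    {k : ℕ} (f : Fin k → R) (df : Fin k → ℕ)
    (hf : ∀ i, f i ∈ 𝒜 (df i)) (hdf : ∀ i, 0 < df i)
    (p : Fin k → ℕ) (hp : ∀ i, 1 ≤ p i) :
    IsRegSeq f ↔ IsRegSeq (fun i => f i ^ p i) := by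
  rw [isRegSeq_iff_isWeaklyRegularMod_bot, isRegSeq_iff_isWeaklyRegularMod_bot, ne_eq, ne_eq,
    Ideal.span_range_pow_eq_top_iff f hp,
    isWeaklyRegularMod_ofFn_pow hf hdf hp (Ideal.IsHomogeneous.bot 𝒜)]

/-- In a Noetherian connected ℕ-graded domain `R` over a field `K`, for
homogeneous `f₁,…,f_k` of positive degree and integers `p₁,…,p_k ≥ 1`, the sequence
`f₁,…,f_k` is regular in `R` if and only if `f₁^{p₁},…,f_k^{p_k}` is regular in `R`. -/
theorem stmt6 {K R : Type*} [Field K] [CommRing R] [Algebra K R]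
    [IsNoetherianRing R] [IsDomain R]
    (𝒜 : ℕ → Submodule K R) [GradedAlgebra 𝒜] (h0 : 𝒜 0 = 1)
    {k : ℕ} (f : Fin k → R) (df : Fin k → ℕ)
    (hf : ∀ i, f i ∈ 𝒜 (df i)) (hdf : ∀ i, 0 < df i)
    (p : Fin k → ℕ) (hp : ∀ i, 1 ≤ p i) :
    IsRegSeq f ↔ IsRegSeq (fun i => f i ^ p i) :=
  stmt6_general 𝒜 f df hf hdf p hp
end

section
/- Let K be a field, R = K[X₁,…,X_n] a polynomial ring over K, and G a group acting on R by K-algebra automorphisms. Let g : G → R satisfy the cocycle identity g(στ) = σ·g(τ) + g(σ) for all σ, τ ∈ G, and suppose g is not a coboundary, i.e. there is no h ∈ R with g(σ) = σ·h − h for all σ ∈ G. Let a₁, a₂, a₃ ∈ R^G with a₁ ≠ 0 and with a₁ and a₂ relatively prime in R (every common divisor of a₁ and a₂ in R is a unit), and suppose there exist b₁, b₂, b₃ ∈ R with σ·b_i − b_i = a_i·g(σ) for all σ ∈ G and i = 1, 2, 3. Then u := a₁b₂ − a₂b₁ lies in R^G, u·a₃ lies in the ideal of R^G generated by a₁ and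 a₂, but u does not lie in that ideal; in particular, a₁, a₂, a₃ is not a regular sequence in the invariant ring R^G. -/
/-- The subalgebra of elements fixed by a family of `K`-algebra automorphisms. -/
def fixedPointsSubalgebra {K R : Type*} [CommSemiring K] [CommSemiring R] [Algebra K R]
    {ι : Sort*} (ρ : ι → (R ≃ₐ[K] R)) : Subalgebra K R where
  carrier := {r | ∀ i, ρ i r = r}
  mul_mem' := fun ha hb i => by rw [map_mul, ha i, hb i]
  one_mem' := fun i => map_one (ρ i)
  add_mem' := fun ha hb i => by rw [map_add, ha i, hb i]
  zero_mem' := fun i => map_zero (ρ i)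
  algebraMap_mem' := fun k i => (ρ i).commutes k

theorem mem_fixedPointsSubalgebra {K R : Type*} [CommSemiring K] [CommSemiring R] [Algebra K R]
    {ι : Sort*} (ρ : ι → (R ≃ₐ[K] R)) (x : R) :
    x ∈ fixedPointsSubalgebra ρ ↔ ∀ i, ρ i x = x := Iff.rfl

/-- Let `G` act on `R = K[X₁,…,X_n]` by `K`-algebra automorphisms, let
`g : G → R` be a 1-cocycle which is not a coboundary, let `a₁, a₂, a₃ ∈ R^G` with `a₁ ≠ 0`,
`a₁, a₂` relatively prime, and suppose `b_i ∈ R` satisfy `σ·b_i − b_i = a_i·g(σ)`.  Then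
`u := a₁b₂ − a₂b₁` is invariant, `u·a₃` lies in the ideal of `R^G` generated by `a₁, a₂`, but
`u` does not; in particular `a₁, a₂, a₃` is not a regular sequence in `R^G`. -/
theorem stmt11 {K : Type*} [Field K] {n : ℕ} {G : Type*} [Group G]
    (ρ : G →* (MvPolynomial (Fin n) K ≃ₐ[K] MvPolynomial (Fin n) K))
    (g : G → MvPolynomial (Fin n) K)
    (hcoc : ∀ σ τ : G, g (σ * τ) = ρ σ (g τ) + g σ)
    (hnb : ¬ ∃ h : MvPolynomial (Fin n) K, ∀ σ : G, g σ = ρ σ h - h)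
    (a : Fin 3 → MvPolynomial (Fin n) K)
    (ha : ∀ (i : Fin 3) (σ : G), ρ σ (a i) = a i)
    (ha1 : a 0 ≠ 0)
    (hcop : ∀ d : MvPolynomial (Fin n) K, d ∣ a 0 → d ∣ a 1 → IsUnit d)
    (b : Fin 3 → MvPolynomial (Fin n) K)
    (hb : ∀ (i : Fin 3) (σ : G), ρ σ (b i) - b i = a i * g σ) :
    ∃ hu : ∀ σ : G, ρ σ (a 0 * b 1 - a 1 * b 0) = a 0 * b 1 - a 1 * b 0,
      ((⟨a 0 * b 1 - a 1 * b 0, (mem_fixedPointsSubalgebra (fun σ : G => ρ σ) _).mpr hu⟩ :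
            fixedPointsSubalgebra (fun σ : G => ρ σ)) *
          ⟨a 2, (mem_fixedPointsSubalgebra _ _).mpr (fun σ => ha 2 σ)⟩ ∈
        Ideal.span {(⟨a 0, (mem_fixedPointsSubalgebra _ _).mpr (fun σ => ha 0 σ)⟩ :
            fixedPointsSubalgebra (fun σ : G => ρ σ)),
          ⟨a 1, (mem_fixedPointsSubalgebra _ _).mpr (fun σ => ha 1 σ)⟩}) ∧
      ((⟨a 0 * b 1 - a 1 * b 0, (mem_fixedPointsSubalgebra (fun σ : G => ρ σ) _).mpr hu⟩ :
            fixedPointsSubalgebra (fun σ : G => ρ σ)) ∉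
        Ideal.span {(⟨a 0, (mem_fixedPointsSubalgebra _ _).mpr (fun σ => ha 0 σ)⟩ :
            fixedPointsSubalgebra (fun σ : G => ρ σ)),
          ⟨a 1, (mem_fixedPointsSubalgebra _ _).mpr (fun σ => ha 1 σ)⟩}) ∧
      ¬ IsRegSeq (![⟨a 0, (mem_fixedPointsSubalgebra _ _).mpr (fun σ => ha 0 σ)⟩,
          ⟨a 1, (mem_fixedPointsSubalgebra _ _).mpr (fun σ => ha 1 σ)⟩,
          ⟨a 2, (mem_fixedPointsSubalgebra _ _).mpr (fun σ => ha 2 σ)⟩] :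
        Fin 3 → fixedPointsSubalgebra (fun σ : G => ρ σ)) := by
  have key : ∀ (x y : Fin 3) (σ : G), ρ σ (a x * b y - a y * b x) = a x * b y - a y * b x := by
    intro x y σ
    have hx : ρ σ (b x) = b x + a x * g σ := by
      have := hb x σ; linear_combination this
    have hy : ρ σ (b y) = b y + a y * g σ := by
      have := hb y σ; linear_combination this
    rw [map_sub, map_mul, map_mul, ha x σ, ha y σ, hx, hy]; ring
  have hmem : (⟨a 0 * b 1 - a 1 * b 0,
        (mem_fixedPointsSubalgebra (fun σ : G => ρ σ) _).mpr (key 0 1)⟩ :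
        fixedPointsSubalgebra (fun σ : G => ρ σ)) *
        ⟨a 2, (mem_fixedPointsSubalgebra _ _).mpr (fun σ => ha 2 σ)⟩ ∈
      Ideal.span {(⟨a 0, (mem_fixedPointsSubalgebra _ _).mpr (fun σ => ha 0 σ)⟩ :
          fixedPointsSubalgebra (fun σ : G => ρ σ)),
        ⟨a 1, (mem_fixedPointsSubalgebra _ _).mpr (fun σ => ha 1 σ)⟩} := by
    rw [Ideal.mem_span_pair]
    refine ⟨⟨a 2 * b 1 - a 1 * b 2, (mem_fixedPointsSubalgebra _ _).mpr (key 2 1)⟩,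
      ⟨a 0 * b 2 - a 2 * b 0, (mem_fixedPointsSubalgebra _ _).mpr (key 0 2)⟩, ?_⟩
    ext
    push_cast
    ring
  have hnmem : (⟨a 0 * b 1 - a 1 * b 0,
        (mem_fixedPointsSubalgebra (fun σ : G => ρ σ) _).mpr (key 0 1)⟩ :
        fixedPointsSubalgebra (fun σ : G => ρ σ)) ∉
      Ideal.span {(⟨a 0, (mem_fixedPointsSubalgebra _ _).mpr (fun σ => ha 0 σ)⟩ :
          fixedPointsSubalgebra (fun σ : G => ρ σ)),
        ⟨a 1, (mem_fixedPointsSubalgebra _ _).mpr (fun σ => ha 1 σ)⟩} := by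
    rw [Ideal.mem_span_pair]
    rintro ⟨c, d, hcd⟩
    have hcd' : (c : MvPolynomial (Fin n) K) * a 0 + (d : MvPolynomial (Fin n) K) * a 1
        = a 0 * b 1 - a 1 * b 0 := congrArg Subtype.val hcd
    have hdvd : a 0 ∣ a 1 * (b 0 + (d : MvPolynomial (Fin n) K)) :=
      ⟨b 1 - c, by linear_combination hcd'⟩
    have hrel : IsRelPrime (a 0) (a 1) := hcop
    have hdvd2 : a 0 ∣ b 0 + (d : MvPolynomial (Fin n) K) := hrel.dvd_of_dvd_mul_left hdvd
    obtain ⟨h, hh⟩ := hdvd2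
    refine hnb ⟨h, fun σ => ?_⟩
    have hd : ρ σ (d : MvPolynomial (Fin n) K) = d := d.2 σ
    have h0 : a 0 * (ρ σ h - h) = a 0 * g σ := by
      have h1 := hb 0 σ
      have h2 : ρ σ (b 0 + (d : MvPolynomial (Fin n) K)) = ρ σ (a 0 * h) := by rw [hh]
      rw [map_add, hd, map_mul, ha 0 σ] at h2
      linear_combination h1 - h2 + hh
    exact (mul_left_cancel₀ ha1 h0).symm
  refine ⟨key 0 1, hmem, hnmem, ?_⟩
  rintro ⟨-, hreg⟩
  have hset : (![(⟨a 0, (mem_fixedPointsSubalgebra _ _).mpr (fun σ => ha 0 σ)⟩ :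
        fixedPointsSubalgebra (fun σ : G => ρ σ)),
      ⟨a 1, (mem_fixedPointsSubalgebra _ _).mpr (fun σ => ha 1 σ)⟩,
      ⟨a 2, (mem_fixedPointsSubalgebra _ _).mpr (fun σ => ha 2 σ)⟩] ''
      {j : Fin 3 | j < 2}) =
      {(⟨a 0, (mem_fixedPointsSubalgebra _ _).mpr (fun σ => ha 0 σ)⟩ :
        fixedPointsSubalgebra (fun σ : G => ρ σ)),
      ⟨a 1, (mem_fixedPointsSubalgebra _ _).mpr (fun σ => ha 1 σ)⟩} := by
    have hs : {j : Fin 3 | j < 2} = {(0 : Fin 3), 1} := by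
      ext j; fin_cases j <;> simp <;> decide
    rw [hs, Set.image_insert_eq, Set.image_singleton]
    simp
  have h3 := hreg 2 _ (by rw [hset]; exact hmem)
  rw [hset] at h3
  exact hnmem h3
end

section
/- Let K be an algebraically closed field of characteristic 2, let n ≥ 2, and let G be a subgroup of GL_n(K) such that for at least three distinct values a ∈ K the n×n matrix whose upper-left 2×2 block is [[a, a+1],[a+1, a]] and which agrees with the identity matrix in all other entries belongs to G. Let G act on the polynomial ring K[X₁,…,X_n] by linear substitutions, σ·X_j = Σ_{i=1}^n σ_{ij}·X_i, let V = K[X₁,…,X_n]₂ be the space of homogeneous polynomials of degree 2 (a G-invariant subspace), and let W = span_K(X₁²,…,X_n²) ⊆ V (a G-invariant subspace, by the Frobenius). Then W has no G-invariant complement in V: there is no K-subspace C of V with V = W ⊕ C and σ·C ⊆ C for all σ ∈ G. -/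
/-- The action of a matrix `M` on the polynomial ring by linear substitution of the
variables: `M · X_j = Σ_i M_{ij} · X_i`. -/
noncomputable def matrixSubstAlgHom {K : Type*} [CommSemiring K] {n : ℕ}
    (M : Matrix (Fin n) (Fin n) K) :
    MvPolynomial (Fin n) K →ₐ[K] MvPolynomial (Fin n) K :=
  MvPolynomial.aeval fun j => ∑ i, MvPolynomial.C (M i j) * MvPolynomial.X i

open MvPolynomial

private lemma sum_two_aux {n : ℕ} {i0 i1 : Fin n} (h0 : (i0 : ℕ) = 0) (h1 : (i1 : ℕ) = 1)
    {M : Type*} [AddCommMonoid M] (f : Fin n → M)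
    (hf : ∀ i : Fin n, 2 ≤ (i : ℕ) → f i = 0) :
    ∑ i, f i = f i0 + f i1 := by
  have h01 : i0 ≠ i1 := by
    intro h; rw [h] at h0; omega
  rw [← Finset.sum_pair h01]
  refine (Finset.sum_subset (Finset.subset_univ _) (fun x _ hx => hf x ?_)).symm
  simp only [Finset.mem_insert, Finset.mem_singleton] at hx
  push_neg at hx
  rcases hx with ⟨hx0, hx1⟩
  rw [Fin.ne_iff_vne, h0] at hx0
  rw [Fin.ne_iff_vne, h1] at hx1
  omega

private lemma substMat {K : Type*} [Field K] {n : ℕ} {i0 i1 : Fin n}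
    (h0 : (i0 : ℕ) = 0) (h1 : (i1 : ℕ) = 1) (a : K)
    (Ma : Matrix (Fin n) (Fin n) K)
    (hMa : Ma = Matrix.of fun i j : Fin n =>
      if (i.val = 0 ∧ j.val = 0) ∨ (i.val = 1 ∧ j.val = 1) then a
      else if (i.val = 0 ∧ j.val = 1) ∨ (i.val = 1 ∧ j.val = 0) then a + 1
      else if i = j then 1 else 0) :
    matrixSubstAlgHom Ma (X i0) = C a * X i0 + C (a + 1) * X i1 ∧
    matrixSubstAlgHom Ma (X i1) = C (a + 1) * X i0 + C a * X i1 ∧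
    ∀ j : Fin n, 2 ≤ (j : ℕ) → matrixSubstAlgHom Ma (X j) = X j := by
  have hsub : ∀ j : Fin n, matrixSubstAlgHom Ma (X j) = ∑ i, C (Ma i j) * X i := by
    intro j; simp [matrixSubstAlgHom]
  have hentry : ∀ i j : Fin n, Ma i j =
      if (i.val = 0 ∧ j.val = 0) ∨ (i.val = 1 ∧ j.val = 1) then a
      else if (i.val = 0 ∧ j.val = 1) ∨ (i.val = 1 ∧ j.val = 0) then a + 1
      else if i = j then 1 else 0 := by
    intro i j; rw [hMa]; rfl
  refine ⟨?_, ?_, ?_⟩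
  · rw [hsub, sum_two_aux h0 h1 _ (fun i hi => ?_)]
    · congr 1
      · congr 1
        rw [hentry]
        simp [h0]
      · congr 1
        rw [hentry]
        have : (i1 : ℕ) ≠ 0 := by omega
        simp [h0, h1]
    · have hM0 : Ma i i0 = 0 := by
        rw [hentry]
        have hne : i ≠ i0 := by rw [Fin.ne_iff_vne, h0]; omega
        simp only [h0]
        split_ifs with hc1 hc2 hc3 <;> first | rfl | omega | (exact absurd hc3 hne)
      rw [hM0]; simp
  · rw [hsub, sum_two_aux h0 h1 _ (fun i hi => ?_)]
    · congr 1
      · congr 1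
        rw [hentry]
        simp [h0, h1]
      · congr 1
        rw [hentry]
        simp [h1]
    · have hM0 : Ma i i1 = 0 := by
        rw [hentry]
        have hne : i ≠ i1 := by rw [Fin.ne_iff_vne, h1]; omega
        simp only [h1]
        split_ifs with hc1 hc2 hc3 <;> first | rfl | omega | (exact absurd hc3 hne)
      rw [hM0]; simp
  · intro j hj
    have hMj : ∀ i : Fin n, Ma i j = if i = j then 1 else 0 := by
      intro i
      rw [hentry]
      split_ifs with hc1 hc2 <;> first | rfl | omega
    rw [hsub]
    have heach : ∀ i : Fin n, C (Ma i j) * X i = if i = j then X i else 0 := by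
      intro i; rw [hMj]; split_ifs <;> simp
    rw [Finset.sum_congr rfl (fun i _ => heach i)]
    simp

/-- Let `K` be algebraically closed of characteristic `2`, `n ≥ 2`, and
`G ≤ GL_n(K)` a subgroup containing, for at least three distinct values `a ∈ K`, the matrix
with upper-left `2×2` block `[[a, a+1],[a+1, a]]` and agreeing with the identity elsewhere.
Then the span `W` of `X₁²,…,X_n²` has no `G`-invariant complement in the space `V` of
homogeneous polynomials of degree `2`. -/
theorem stmt12 {K : Type*} [Field K] [IsAlgClosed K] [CharP K 2]
    {n : ℕ} (hn : 2 ≤ n) (G : Subgroup (Matrix.GeneralLinearGroup (Fin n) K))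
    (hG : ∃ a₁ a₂ a₃ : K, a₁ ≠ a₂ ∧ a₁ ≠ a₃ ∧ a₂ ≠ a₃ ∧
      ∀ a ∈ ({a₁, a₂, a₃} : Set K), ∃ g ∈ G,
        (g : Matrix (Fin n) (Fin n) K) = Matrix.of fun i j : Fin n =>
          if (i.val = 0 ∧ j.val = 0) ∨ (i.val = 1 ∧ j.val = 1) then a
          else if (i.val = 0 ∧ j.val = 1) ∨ (i.val = 1 ∧ j.val = 0) then a + 1
          else if i = j then 1 else 0) :
    ¬ ∃ C : Submodule K (MvPolynomial (Fin n) K),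
        C ≤ MvPolynomial.homogeneousSubmodule (Fin n) K 2 ∧
        Submodule.span K (Set.range fun i : Fin n => (MvPolynomial.X i : MvPolynomial (Fin n) K) ^ 2)
            ⊓ C = ⊥ ∧
        Submodule.span K (Set.range fun i : Fin n => (MvPolynomial.X i : MvPolynomial (Fin n) K) ^ 2)
            ⊔ C = MvPolynomial.homogeneousSubmodule (Fin n) K 2 ∧
        ∀ g ∈ G, ∀ c ∈ C, matrixSubstAlgHom (g : Matrix (Fin n) (Fin n) K) c ∈ C := by
  rintro ⟨Cs, -, hinf, hsup, hinvar⟩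
  obtain ⟨a₁, a₂, a₃, h12, h13, h23, hmem⟩ := hG
  set i0 : Fin n := ⟨0, by omega⟩ with hi0
  set i1 : Fin n := ⟨1, by omega⟩ with hi1
  have h0 : (i0 : ℕ) = 0 := rfl
  have h1 : (i1 : ℕ) = 1 := rfl
  have hne01 : i0 ≠ i1 := by rw [Fin.ne_iff_vne, h0, h1]; omega
  have h2K : (2 : K) = 0 := by
    have := CharP.cast_eq_zero K 2
    exact_mod_cast this
  have h2P : (2 : MvPolynomial (Fin n) K) = 0 := by
    rw [← map_ofNat (C : K →+* MvPolynomial (Fin n) K) 2, h2K, map_zero]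
  set W : Submodule K (MvPolynomial (Fin n) K) :=
    Submodule.span K (Set.range fun i : Fin n => (MvPolynomial.X i : MvPolynomial (Fin n) K) ^ 2)
    with hW
  have hXsqW : ∀ i : Fin n, (X i : MvPolynomial (Fin n) K) ^ 2 ∈ W :=
    fun i => Submodule.subset_span ⟨i, rfl⟩
  -- decompose X i0 * X i1 along W ⊕ Cs
  have hprodV : (X i0 * X i1 : MvPolynomial (Fin n) K) ∈
      MvPolynomial.homogeneousSubmodule (Fin n) K 2 := by
    rw [mem_homogeneousSubmodule]
    exact (isHomogeneous_X K i0).mul (isHomogeneous_X K i1)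
  have hprodWC : (X i0 * X i1 : MvPolynomial (Fin n) K) ∈ W ⊔ Cs := by
    rw [hsup]; exact hprodV
  obtain ⟨w, hw, c, hc, hwc⟩ := Submodule.mem_sup.mp hprodWC
  obtain ⟨l, hl⟩ := (Submodule.mem_span_range_iff_exists_fun K).mp hw
  -- coefficient extraction at the monomial X i0 ^ 2
  set m0 : Fin n →₀ ℕ := Finsupp.single i0 2 with hm0
  have hcoeffsq : ∀ i : Fin n, coeff m0 ((X i : MvPolynomial (Fin n) K) ^ 2)
      = if i = i0 then 1 else 0 := by
    intro i
    rw [coeff_X_pow]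
    congr 1
    rw [hm0]
    rw [eq_iff_iff]
    constructor
    · intro h
      exact (Finsupp.single_left_inj (by norm_num : (2:ℕ) ≠ 0)).mp h
    · intro h; rw [h]
  have hcoeffprod : coeff m0 (X i0 * X i1 : MvPolynomial (Fin n) K) = 0 := by
    have hXX : (X i0 * X i1 : MvPolynomial (Fin n) K)
        = monomial (Finsupp.single i0 1 + Finsupp.single i1 1) 1 := by
      rw [X, X, monomial_mul, one_mul]
    rw [hXX, coeff_monomial, if_neg]
    intro h
    have hq := DFunLike.congr_fun h i1
    rw [hm0] at hq
    simp [Finsupp.single_apply, hne01, hne01.symm] at hq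
  have hcoeffw : coeff m0 w = l i0 := by
    rw [← hl, coeff_sum]
    have : ∀ i : Fin n, coeff m0 (l i • (X i : MvPolynomial (Fin n) K) ^ 2)
        = if i = i0 then l i else 0 := by
      intro i
      rw [coeff_smul, hcoeffsq]
      split_ifs <;> simp
    rw [Finset.sum_congr rfl (fun i _ => this i), Finset.sum_ite_eq' Finset.univ i0 l]
    simp
  -- the key equation, one for each of the three special values of `a`
  have key : ∀ a : K, a ∈ ({a₁, a₂, a₃} : Set K) →
      (l i0 + l i1) * (a ^ 2 + 1) = a ^ 2 + a := by
    intro a ha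
    obtain ⟨g, hg, hgeq⟩ := hmem a ha
    obtain ⟨hσ0, hσ1, hσj⟩ := substMat h0 h1 a ((g : Matrix (Fin n) (Fin n) K)) hgeq
    set σ := matrixSubstAlgHom ((g : Matrix (Fin n) (Fin n) K) ) with hσdef
    have eC1 : (C (a + 1) : MvPolynomial (Fin n) K) = C a + 1 := by rw [map_add, map_one]
    have eC2 : (C (a^2 + a) : MvPolynomial (Fin n) K) = (C a)^2 + C a := by
      rw [map_add, map_pow]
    have eC3 : (C (a^2) : MvPolynomial (Fin n) K) = (C a)^2 := by rw [map_pow]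
    have eC4 : (C ((a+1)^2) : MvPolynomial (Fin n) K) = (C a + 1)^2 := by
      rw [map_pow, map_add, map_one]
    -- action on the product
    have hσprod : σ (X i0 * X i1) = C (a^2 + a) * X i0^2 + C (a^2 + a) * X i1^2
        + X i0 * X i1 := by
      rw [map_mul, hσ0, hσ1, eC1, eC2]
      linear_combination ((C a : MvPolynomial (Fin n) K)^2 + C a) * X i0 * X i1 * h2P
    -- action on squares
    have hσsq0 : σ (X i0 ^ 2) = C (a^2) * X i0^2 + C ((a+1)^2) * X i1^2 := by
      rw [map_pow, hσ0, eC1, eC3, eC4]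
      linear_combination ((C a : MvPolynomial (Fin n) K) * (C a + 1) * X i0 * X i1) * h2P
    have hσsq1 : σ (X i1 ^ 2) = C ((a+1)^2) * X i0^2 + C (a^2) * X i1^2 := by
      rw [map_pow, hσ1, eC1, eC3, eC4]
      linear_combination ((C a : MvPolynomial (Fin n) K) * (C a + 1) * X i0 * X i1) * h2P
    have hσsqj : ∀ j : Fin n, 2 ≤ (j : ℕ) → σ (X j ^ 2) = X j ^ 2 := by
      intro j hj; rw [map_pow, hσj j hj]
    -- σ w and its membership in W
    have hσw : σ w = ∑ i, l i • σ ((X i : MvPolynomial (Fin n) K) ^ 2) := by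
      rw [← hl, map_sum]
      exact Finset.sum_congr rfl fun i _ => by rw [map_smul]
    have hle1 : ∀ i : Fin n, ¬ 2 ≤ (i : ℕ) → i = i0 ∨ i = i1 := by
      intro i hi
      have hi2 : (i : ℕ) = 0 ∨ (i : ℕ) = 1 := by omega
      rcases hi2 with h | h
      · left; rw [Fin.ext_iff, h0]; exact h
      · right; rw [Fin.ext_iff, h1]; exact h
    have hσsqW : ∀ i : Fin n, σ ((X i : MvPolynomial (Fin n) K) ^ 2) ∈ W := by
      intro i
      by_cases hi : 2 ≤ (i : ℕ)
      · rw [hσsqj i hi]; exact hXsqW i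
      · rcases hle1 i hi with h | h
        · rw [h, hσsq0]
          exact Submodule.add_mem _
            (by rw [C_mul']; exact Submodule.smul_mem _ _ (hXsqW i0))
            (by rw [C_mul']; exact Submodule.smul_mem _ _ (hXsqW i1))
        · rw [h, hσsq1]
          exact Submodule.add_mem _
            (by rw [C_mul']; exact Submodule.smul_mem _ _ (hXsqW i0))
            (by rw [C_mul']; exact Submodule.smul_mem _ _ (hXsqW i1))
    have hσwW : σ w ∈ W := by
      rw [hσw]
      exact Submodule.sum_mem _ fun i _ => Submodule.smul_mem _ _ (hσsqW i)
    -- σ fixes c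
    have hcw : c = X i0 * X i1 - w := by rw [← hwc]; ring
    have hσc : σ c = c := by
      have hmemC : σ c - c ∈ Cs := sub_mem (hinvar g hg c hc) hc
      have hexp : σ c - c = C (a^2 + a) * X i0^2 + C (a^2 + a) * X i1^2 - σ w + w := by
        rw [hcw, map_sub, hσprod]; ring
      have hmemW : σ c - c ∈ W := by
        rw [hexp]
        refine Submodule.add_mem _ (Submodule.sub_mem _ (Submodule.add_mem _ ?_ ?_) hσwW) hw
        · rw [C_mul']; exact Submodule.smul_mem _ _ (hXsqW i0)
        · rw [C_mul']; exact Submodule.smul_mem _ _ (hXsqW i1)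
      have hbot : σ c - c ∈ W ⊓ Cs := ⟨hmemW, hmemC⟩
      rw [hinf, Submodule.mem_bot] at hbot
      exact sub_eq_zero.mp hbot
    -- derive the equation for σ w
    have hσweq : σ w = C (a^2 + a) * X i0^2 + C (a^2 + a) * X i1^2 + w := by
      have h' := hσc
      rw [hcw, map_sub, hσprod] at h'
      linear_combination -h'
    -- coefficient of m0 in σ w
    have hcoeffσw : coeff m0 (σ w) = l i0 * a^2 + l i1 * (a+1)^2 := by
      rw [hσw, coeff_sum]
      have heach : ∀ i : Fin n, coeff m0 (l i • σ ((X i : MvPolynomial (Fin n) K) ^ 2))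
          = l i * coeff m0 (σ ((X i : MvPolynomial (Fin n) K) ^ 2)) := by
        intro i; rw [coeff_smul]; rfl
      rw [Finset.sum_congr rfl (fun i _ => heach i)]
      rw [sum_two_aux h0 h1 _ (fun i hi => ?_)]
      · rw [hσsq0, hσsq1]
        simp only [coeff_add, coeff_C_mul, hcoeffsq, eq_self_iff_true, if_true,
          if_neg hne01.symm]
        ring
      · rw [hσsqj i hi, hcoeffsq, if_neg (by intro he; rw [he, h0] at hi; omega)]
        ring
    -- combine into the key scalar equation
    have hEq : l i0 * a^2 + l i1 * (a+1)^2 = (a^2 + a) + l i0 := by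
      have hcg := congrArg (coeff m0) hσweq
      rw [hcoeffσw] at hcg
      simp only [coeff_add, coeff_C_mul, hcoeffsq, eq_self_iff_true, if_true,
        if_neg hne01.symm, hcoeffw] at hcg
      linear_combination hcg
    linear_combination hEq + (l i0 - l i1 * a) * h2K
  -- three distinct values give a contradiction
  have e1 := key a₁ (by simp)
  have e2 := key a₂ (by simp)
  have e3 := key a₃ (by simp)
  set s : K := l i0 + l i1 with hs
  have pair : ∀ x y : K, s * (x ^ 2 + 1) = x ^ 2 + x → s * (y ^ 2 + 1) = y ^ 2 + y →
      x ≠ y → (s - 1) * (x + y) = 1 := by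
    intro x y hx hy hxy
    have hsubne : x - y ≠ 0 := sub_ne_zero.mpr hxy
    have hmul : (x - y) * ((s - 1) * (x + y) - 1) = 0 := by linear_combination hx - hy
    rcases mul_eq_zero.mp hmul with h | h
    · exact absurd h hsubne
    · linear_combination h
  have p12 := pair a₁ a₂ e1 e2 h12
  have p13 := pair a₁ a₃ e1 e3 h13
  have hzero : (s - 1) * (a₂ - a₃) = 0 := by linear_combination p12 - p13
  rcases mul_eq_zero.mp hzero with h | h
  · rw [h, zero_mul] at p12
    exact zero_ne_one p12
  · exact h23 (sub_eq_zero.mp h)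
end

section
/- Let K be an algebraically closed field of characteristic p ≥ 3, let n ≥ 2, and let G be a subgroup of GL_n(K) containing the n×n matrix whose upper-left 2×2 block is [[1, 1],[0, 1]] and which agrees with the identity matrix in all other entries. Let G act on the polynomial ring K[X₁,…,X_n] by linear substitutions, σ·X_j = Σ_{i=1}^n σ_{ij}·X_i, let V = K[X₁,…,X_n]_p be the space of homogeneous polynomials of degree p (a G-invariant subspace), and let W = span_K(X₁^p,…,X_n^p) ⊆ V (a G-invariant subspace, by the Frobenius). Then W has no G-invariant complement in V: there is no K-subspace C of V with V = W ⊕ C and σ·C ⊆ C for all σ ∈ G. -/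
open MvPolynomial in
/-- Let `K` be algebraically closed of characteristic `p ≥ 3`, `n ≥ 2`, and
`G ≤ GL_n(K)` a subgroup containing the matrix with upper-left `2×2` block `[[1,1],[0,1]]` and
agreeing with the identity elsewhere.  Then the span `W` of `X₁^p,…,X_n^p` has no
`G`-invariant complement in the space `V` of homogeneous polynomials of degree `p`. -/
theorem stmt13 {K : Type*} [Field K] [IsAlgClosed K] (p : ℕ) [CharP K p] (hp : 3 ≤ p)
    {n : ℕ} (hn : 2 ≤ n) (G : Subgroup (Matrix.GeneralLinearGroup (Fin n) K))
    (hG : ∃ g ∈ G,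
      (g : Matrix (Fin n) (Fin n) K) = Matrix.of fun i j : Fin n =>
        if i = j then 1
        else if i.val = 0 ∧ j.val = 1 then 1
        else 0) :
    ¬ ∃ C : Submodule K (MvPolynomial (Fin n) K),
        C ≤ MvPolynomial.homogeneousSubmodule (Fin n) K p ∧
        Submodule.span K (Set.range fun i : Fin n => (MvPolynomial.X i : MvPolynomial (Fin n) K) ^ p)
            ⊓ C = ⊥ ∧
        Submodule.span K (Set.range fun i : Fin n => (MvPolynomial.X i : MvPolynomial (Fin n) K) ^ p)
            ⊔ C = MvPolynomial.homogeneousSubmodule (Fin n) K p ∧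
        ∀ g ∈ G, ∀ c ∈ C, matrixSubstAlgHom (g : Matrix (Fin n) (Fin n) K) c ∈ C := by
  rintro ⟨C, -, hWC, hVWC, hCinv⟩
  obtain ⟨g, hgG, hg⟩ := hG
  have hp0 : p ≠ 0 := by omega
  have hppr : p.Prime := (CharP.char_is_prime_or_zero K p).resolve_right hp0
  haveI : Fact p.Prime := ⟨hppr⟩
  set i0 : Fin n := ⟨0, by omega⟩ with hi0
  set i1 : Fin n := ⟨1, by omega⟩ with hi1
  have h01 : i0 ≠ i1 := by simp [hi0, hi1, Fin.ext_iff]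
  set f : MvPolynomial (Fin n) K →ₐ[K] MvPolynomial (Fin n) K :=
    matrixSubstAlgHom (g : Matrix (Fin n) (Fin n) K) with hf
  set W : Submodule K (MvPolynomial (Fin n) K) :=
    Submodule.span K (Set.range fun i : Fin n => (MvPolynomial.X i : MvPolynomial (Fin n) K) ^ p)
    with hWdef
  -- action on variables
  have hfX : ∀ j : Fin n, f (X j) = if j = i1 then X i0 + X i1 else X j := by
    intro j
    rw [hf, matrixSubstAlgHom, MvPolynomial.aeval_X, hg]
    by_cases hj : j = i1
    · subst hj
      rw [if_pos rfl]
      have key : ∀ i : Fin n,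
          MvPolynomial.C ((Matrix.of fun i j : Fin n =>
            if i = j then (1:K) else if i.val = 0 ∧ j.val = 1 then 1 else 0) i i1) * X i
          = (if i = i0 then X i0 else 0) + (if i = i1 then X i1 else 0) := by
        intro i
        rcases eq_or_ne i i1 with h1 | h1
        · subst h1
          simp [Matrix.of_apply, h01, Ne.symm h01]
        · rcases eq_or_ne i i0 with h0 | h0
          · subst h0
            simp [Matrix.of_apply, h01, hi0, hi1]
          · have hv : ¬ i.val = 0 := fun h => h0 (Fin.ext h)
            simp [Matrix.of_apply, h1, h0, hv]
      rw [Finset.sum_congr rfl fun i _ => key i, Finset.sum_add_distrib,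
        Finset.sum_ite_eq', Finset.sum_ite_eq']
      simp
    · rw [if_neg hj]
      have hjv : ¬ j.val = 1 := fun h => hj (Fin.ext h)
      have key : ∀ i : Fin n,
          MvPolynomial.C ((Matrix.of fun i j : Fin n =>
            if i = j then (1:K) else if i.val = 0 ∧ j.val = 1 then 1 else 0) i j) * X i
          = if i = j then X j else 0 := by
        intro i
        rcases eq_or_ne i j with h | h
        · subst h; simp [Matrix.of_apply]
        · simp [Matrix.of_apply, h, hjv]
      rw [Finset.sum_congr rfl fun i _ => key i, Finset.sum_ite_eq']
      simp
  -- Frobenius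
  have hfXp : ∀ i : Fin n, f (X i ^ p) =
      if i = i1 then X i0 ^ p + X i1 ^ p else X i ^ p := by
    intro i
    rw [map_pow, hfX]
    rcases eq_or_ne i i1 with h | h
    · rw [if_pos h, if_pos h, add_pow_char]
    · rw [if_neg h, if_neg h]
  have hXpW : ∀ i : Fin n, X i ^ p ∈ W := fun i => Submodule.subset_span ⟨i, rfl⟩
  -- structure of f on W
  have hW : ∀ w ∈ W, f w = w + MvPolynomial.coeff (Finsupp.single i1 p) w • X i0 ^ p := by
    intro w hw
    induction hw using Submodule.span_induction with
    | mem x hx =>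
      obtain ⟨i, rfl⟩ := hx
      rw [hfXp]
      rcases eq_or_ne i i1 with h | h
      · subst h
        rw [if_pos rfl, MvPolynomial.coeff_X_pow, if_pos rfl, one_smul, add_comm]
      · rw [if_neg h, MvPolynomial.coeff_X_pow, if_neg, zero_smul, add_zero]
        rw [Finsupp.single_left_inj hp0]
        exact h
    | zero => simp
    | add x y hx hy ihx ihy =>
      rw [map_add, MvPolynomial.coeff_add, ihx, ihy, add_smul]; ring
    | smul a x hx ih =>
      rw [map_smul, MvPolynomial.coeff_smul, ih, smul_add, smul_smul, smul_eq_mul]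
  have hWf : ∀ w ∈ W, f w ∈ W := by
    intro w hw
    rw [hW w hw]
    exact Submodule.add_mem _ hw (Submodule.smul_mem _ _ (hXpW i0))
  have hCf : ∀ c ∈ C, f c ∈ C := fun c hc => hCinv g hgG c hc
  -- the two key elements
  set u1 : MvPolynomial (Fin n) K := X i0 ^ (p-1) * X i1 with hu1def
  set u2 : MvPolynomial (Fin n) K := X i0 ^ (p-2) * X i1 ^ 2 with hu2def
  have e1 : (X i0 : MvPolynomial (Fin n) K) ^ p = X i0 ^ (p-2) * X i0 ^ 2 := by
    rw [← pow_add]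
    congr 1
    omega
  have e2 : (X i0 : MvPolynomial (Fin n) K) ^ (p-1) = X i0 ^ (p-2) * X i0 := by
    rw [← pow_succ]
    congr 1
    omega
  have e3 : (X i0 : MvPolynomial (Fin n) K) ^ p = X i0 ^ (p-1) * X i0 := by
    rw [← pow_succ]
    congr 1
    omega
  have hfu1 : f u1 = X i0 ^ p + u1 := by
    rw [hu1def, map_mul, map_pow, hfX, hfX, if_neg h01, if_pos rfl, e3]
    ring
  have hfu2 : f u2 = X i0 ^ p + 2 * u1 + u2 := by
    rw [hu2def, map_mul, map_pow, map_pow, hfX, hfX, if_neg h01, if_pos rfl, e1, hu1def, e2]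
    ring
  -- homogeneity and decomposition
  have hu1V : u1 ∈ MvPolynomial.homogeneousSubmodule (Fin n) K p := by
    rw [MvPolynomial.mem_homogeneousSubmodule]
    have h := ((MvPolynomial.isHomogeneous_X K i0).pow (p-1)).mul
      (MvPolynomial.isHomogeneous_X K i1)
    have : 1 * (p-1) + 1 = p := by omega
    rwa [this] at h
  have hu2V : u2 ∈ MvPolynomial.homogeneousSubmodule (Fin n) K p := by
    rw [MvPolynomial.mem_homogeneousSubmodule]
    have h := ((MvPolynomial.isHomogeneous_X K i0).pow (p-2)).mul
      ((MvPolynomial.isHomogeneous_X K i1).pow 2)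
    have : 1 * (p-2) + 1 * 2 = p := by omega
    rwa [this] at h
  rw [← hVWC] at hu1V hu2V
  obtain ⟨w1, hw1, c1, hc1, hsum1⟩ := Submodule.mem_sup.mp hu1V
  obtain ⟨w2, hw2, c2, hc2, hsum2⟩ := Submodule.mem_sup.mp hu2V
  -- equation 1
  have hfsum1 : f w1 + f c1 = X i0 ^ p + w1 + c1 := by
    have h := congrArg f hsum1
    rw [map_add, hfu1, ← hsum1] at h
    rw [h]; ring
  have key1 : f w1 = w1 + X i0 ^ p := by
    have hz : f w1 - (w1 + X i0 ^ p) ∈ W ⊓ C := by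
      constructor
      · exact Submodule.sub_mem _ (hWf w1 hw1) (Submodule.add_mem _ hw1 (hXpW i0))
      · have h2 : f w1 - (w1 + X i0 ^ p) = c1 - f c1 := by linear_combination hfsum1
        rw [h2]
        exact Submodule.sub_mem _ hc1 (hCf c1 hc1)
    rw [hWC, Submodule.mem_bot, sub_eq_zero] at hz
    exact hz
  have ha1 : MvPolynomial.coeff (Finsupp.single i1 p) w1 = 1 := by
    have h := hW w1 hw1
    rw [key1] at h
    have h' : (X i0 ^ p : MvPolynomial (Fin n) K)
        = MvPolynomial.coeff (Finsupp.single i1 p) w1 • X i0 ^ p := add_left_cancel h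
    have h'' := congrArg (MvPolynomial.coeff (Finsupp.single i0 p)) h'
    rw [MvPolynomial.coeff_smul, MvPolynomial.coeff_X_pow, if_pos rfl, smul_eq_mul,
      mul_one] at h''
    exact h''.symm
  -- equation 2
  have hfsum2 : f w2 + f c2 = X i0 ^ p + 2 * w1 + 2 * c1 + w2 + c2 := by
    have h := congrArg f hsum2
    rw [map_add, hfu2, ← hsum1, ← hsum2] at h
    rw [h]; ring
  have key2 : f w2 = w2 + 2 * w1 + X i0 ^ p := by
    have hz : f w2 - (w2 + 2 * w1 + X i0 ^ p) ∈ W ⊓ C := by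
      constructor
      · refine Submodule.sub_mem _ (hWf w2 hw2) ?_
        refine Submodule.add_mem _ (Submodule.add_mem _ hw2 ?_) (hXpW i0)
        rw [two_mul]
        exact Submodule.add_mem _ hw1 hw1
      · have h2 : f w2 - (w2 + 2 * w1 + X i0 ^ p) = 2 * c1 + c2 - f c2 := by
          linear_combination hfsum2
        rw [h2]
        refine Submodule.sub_mem _ ?_ (hCf c2 hc2)
        refine Submodule.add_mem _ ?_ hc2
        rw [two_mul]
        exact Submodule.add_mem _ hc1 hc1
    rw [hWC, Submodule.mem_bot, sub_eq_zero] at hz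
    exact hz
  have hsne : (Finsupp.single i0 p : Fin n →₀ ℕ) ≠ Finsupp.single i1 p := by
    rw [Ne, Finsupp.single_left_inj hp0]
    exact h01
  have hfin : (2 : K) = 0 := by
    have h := hW w2 hw2
    rw [key2] at h
    have h' : (2 * w1 + X i0 ^ p : MvPolynomial (Fin n) K)
        = MvPolynomial.coeff (Finsupp.single i1 p) w2 • X i0 ^ p := by
      have := add_left_cancel (a := w2)
        (b := 2 * w1 + X i0 ^ p)
        (c := MvPolynomial.coeff (Finsupp.single i1 p) w2 • X i0 ^ p) ?_
      · exact this
      · linear_combination h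
    have h'' := congrArg (MvPolynomial.coeff (Finsupp.single i1 p)) h'
    rw [MvPolynomial.coeff_smul, MvPolynomial.coeff_add, MvPolynomial.coeff_X_pow,
      if_neg hsne, two_mul, MvPolynomial.coeff_add, ha1, smul_eq_mul, mul_zero,
      add_zero] at h''
    linear_combination h''
  have : (p : ℕ) ∣ 2 := by
    have := (CharP.cast_eq_zero_iff K p 2).mp (by exact_mod_cast hfin)
    exact this
  have := Nat.le_of_dvd (by norm_num) this
  omega
end

section
/- Let K be an algebraically closed field of characteristic 2 and let R = K[u, v, μ₁, ν₁, π₁, μ₂, ν₂, π₂, μ₃, ν₃, π₃] be the polynomial ring in 11 variables over K. Let SL₂(K) act on R by K-algebra automorphisms, where σ = (a b; c d) ∈ SL₂(K) acts on the variables by σ·u = a²u + c²v, σ·v = b²u + d²v, and for i = 1, 2, 3: σ·μ_i = d²μ_i + b²ν_i + bd·π_i, σ·ν_i = c²μ_i + a²ν_i + ac·π_i, σ·π_i = π_i. Then π₁, π₂, π₃ are SL₂(K)-invariant, but π₁, π₂, π₃ is not a regular sequence in the invariant ring R^{SL₂(K)}. -/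
open MvPolynomial

/-!
Write `qₖ = uμₖ + vνₖ`. In characteristic `2`, `σ = (a b; c d)` sends `qₖ` to
`qₖ + (abu + cdv)πₖ`, with a correction term independent of `k`; hence `gₖₗ = qₖπₗ + qₗπₖ` is
invariant, and `g₂₃π₁ + g₁₃π₂ = g₁₂π₃`. If `π₁, π₂, π₃` were regular in `R^{SL₂}`, then
`g₁₂ = Aπ₁ + Bπ₂` with `A, B` invariant; comparing with `g₁₂ = q₂π₁ + q₁π₂` forces
`A = q₂ + π₂f`. Invariance of `A` under `(1 t; 0 1)` then gives `(1 t; 0 1)·f = f - tu`, and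
evaluating at `u = 1`, all other variables `0`, yields `f(1, t², 0, …) = f(1, 0, …) - t` for every
`t ∈ K`: a polynomial in `t²` cannot agree with `c - t` on an infinite field.
-/

theorem IsRegSeq.mem_span_pair_of_mul_mem {S : Type*} [CommRing S] {a b c g : S}
    (h : IsRegSeq ![a, b, c]) (hg : g * c ∈ Ideal.span {a, b}) : g ∈ Ideal.span {a, b} := by
  have hprev : ![a, b, c] '' {j : Fin 3 | j < 2} = {a, b} := by
    rw [show {j : Fin 3 | j < 2} = {0, 1} by ext j; fin_cases j <;> simp,
      Set.image_pair]
    rfl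
  have hreg := h.2 2 g
  rw [hprev] at hreg
  exact hreg hg

open Polynomial in
theorem Polynomial.not_forall_eval_sq_eq_sub {K : Type*} [Field K] [Infinite K]
    (f : Polynomial K) (c : K) : ¬ ∀ t : K, f.eval (t ^ 2) = c - t := by
  intro h
  have hf : expand K 2 f = C c - X := funext fun t => by simp [expand_eval, h]
  simpa [coeff_expand two_pos, coeff_X_one] using congrArg (coeff · 1) hf

theorem MvPolynomial.not_forall_aeval_add_sq_smul_eq_sub {ι K : Type*} [Field K] [Infinite K]
    (f : MvPolynomial ι K) (x y : ι → K) (c : K) :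
    ¬ ∀ t : K, aeval (x + t ^ 2 • y) f = c - t := by
  refine fun h => Polynomial.not_forall_eval_sq_eq_sub
    (aeval (fun i => Polynomial.C (x i) + Polynomial.C (y i) * Polynomial.X) f) c fun t => ?_
  rw [← h t, ← Polynomial.coe_aeval_eq_eval, ← AlgHom.comp_apply]
  congr 1
  ext i
  simp [mul_comm (y i)]

theorem MvPolynomial.exists_eq_add_X_mul_of_mul_X_add_mul_X_eq {σ R : Type*} [CommRing R]
    [IsDomain R] {i j : σ} (hij : i ≠ j) {a b a' b' : MvPolynomial σ R}
    (h : a * X i + b * X j = a' * X i + b' * X j) : ∃ c, a = a' + X j * c := by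
  have hdvd : X j ∣ (a - a') * X i := ⟨b' - b, by linear_combination h⟩
  obtain ⟨c, hc⟩ := (X_prime.dvd_or_dvd hdvd).resolve_right
    fun hX => hij (X_dvd_X.mp hX).symm
  exact ⟨c, by linear_combination hc⟩

theorem CharTwo.pairing_sq_sl2_eq {R : Type*} [CommRing R] [CharP R 2] {a b c d : R}
    (hdet : a * d - b * c = 1) (u v μ ν π : R) :
    (a ^ 2 * u + c ^ 2 * v) * (d ^ 2 * μ + b ^ 2 * ν + b * d * π)
        + (b ^ 2 * u + d ^ 2 * v) * (c ^ 2 * μ + a ^ 2 * ν + a * c * π)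
      = u * μ + v * ν + (a * b * u + c * d * v) * π := by
  linear_combination
    ((a * d - b * c + 1) * (u * μ + v * ν) + a * b * u * π + c * d * v * π) * hdet
      + (a * b * c * d * (u * μ + v * ν) + a ^ 2 * b ^ 2 * u * ν + c ^ 2 * d ^ 2 * v * μ
        + a * b ^ 2 * c * u * π + b * c ^ 2 * d * v * π) * CharTwo.two_eq_zero (R := R)

namespace SL2Triples

open scoped MatrixGroups

variable {K : Type*} [Field K]

abbrev idxμ : Fin 3 → Fin 11 := ![2, 5, 8]
abbrev idxν : Fin 3 → Fin 11 := ![3, 6, 9]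
abbrev idxπ : Fin 3 → Fin 11 := ![4, 7, 10]

noncomputable def pairing (k : Fin 3) : MvPolynomial (Fin 11) K :=
  X 0 * X (idxμ k) + X 1 * X (idxν k)

noncomputable def cross (k l : Fin 3) : MvPolynomial (Fin 11) K :=
  pairing k * X (idxπ l) + pairing l * X (idxπ k)

theorem cross_mul_add_cross_mul [CharP K 2] (k l m : Fin 3) :
    cross l m * X (idxπ k) + cross k m * X (idxπ l)
      = (cross k l * X (idxπ m) : MvPolynomial (Fin 11) K) := by
  unfold cross
  linear_combination pairing m * X (idxπ k) * X (idxπ l)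
    * CharTwo.two_eq_zero (R := MvPolynomial (Fin 11) K)

structure IsTripleAction
    (ρ : SL(2, K) → (MvPolynomial (Fin 11) K ≃ₐ[K] MvPolynomial (Fin 11) K)) : Prop where
  map_u : ∀ σ : SL(2, K), ρ σ (X 0) = C (σ 0 0 ^ 2) * X 0 + C (σ 1 0 ^ 2) * X 1
  map_v : ∀ σ : SL(2, K), ρ σ (X 1) = C (σ 0 1 ^ 2) * X 0 + C (σ 1 1 ^ 2) * X 1
  map_μ : ∀ (σ : SL(2, K)) (k : Fin 3),
    ρ σ (X (idxμ k)) = C (σ 1 1 ^ 2) * X (idxμ k) + C (σ 0 1 ^ 2) * X (idxν k)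
      + C (σ 0 1 * σ 1 1) * X (idxπ k)
  map_ν : ∀ (σ : SL(2, K)) (k : Fin 3),
    ρ σ (X (idxν k)) = C (σ 1 0 ^ 2) * X (idxμ k) + C (σ 0 0 ^ 2) * X (idxν k)
      + C (σ 0 0 * σ 1 0) * X (idxπ k)
  map_π : ∀ (σ : SL(2, K)) (k : Fin 3), ρ σ (X (idxπ k)) = X (idxπ k)

def unipotent (t : K) : SL(2, K) := ⟨!![1, t; 0, 1], by simp [Matrix.det_fin_two_of]⟩

@[simp]
theorem coe_unipotent (t : K) : (unipotent t : Matrix (Fin 2) (Fin 2) K) = !![1, t; 0, 1] := rfl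

namespace IsTripleAction

variable {ρ : SL(2, K) → (MvPolynomial (Fin 11) K ≃ₐ[K] MvPolynomial (Fin 11) K)}

theorem map_pairing [CharP K 2] (hρ : IsTripleAction ρ) (σ : SL(2, K)) (k : Fin 3) :
    ρ σ (pairing k)
      = pairing k + (C (σ 0 0 * σ 0 1) * X 0 + C (σ 1 0 * σ 1 1) * X 1) * X (idxπ k) := by
  have hdet :
      C (σ 0 0) * C (σ 1 1) - C (σ 0 1) * C (σ 1 0) = (1 : MvPolynomial (Fin 11) K) := by
    rw [← map_mul, ← map_mul, ← map_sub, ← Matrix.det_fin_two, σ.det_coe, map_one]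
  simp only [pairing, map_add, map_mul, hρ.map_u, hρ.map_v, hρ.map_μ, hρ.map_ν, map_pow]
  exact CharTwo.pairing_sq_sl2_eq hdet _ _ _ _ _

theorem cross_mem [CharP K 2] (hρ : IsTripleAction ρ) (k l : Fin 3) :
    cross k l ∈ fixedPointsSubalgebra ρ := fun σ => by
  simp only [cross, map_add, map_mul, hρ.map_pairing, hρ.map_π]
  linear_combination (C (σ 0 0) * C (σ 0 1) * X 0 + C (σ 1 0) * C (σ 1 1) * X 1)
    * X (idxπ k) * X (idxπ l) * CharTwo.two_eq_zero (R := MvPolynomial (Fin 11) K)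

theorem map_pairing_unipotent [CharP K 2] (hρ : IsTripleAction ρ) (t : K) (k : Fin 3) :
    ρ (unipotent t) (pairing k) = pairing k + C t * X 0 * X (idxπ k) := by
  simpa using hρ.map_pairing (unipotent t) k

theorem map_unipotent_of_pairing_add_X_mul_mem [CharP K 2] (hρ : IsTripleAction ρ) {k : Fin 3}
    {f : MvPolynomial (Fin 11) K} (hf : pairing k + X (idxπ k) * f ∈ fixedPointsSubalgebra ρ)
    (t : K) : ρ (unipotent t) f = f - C t * X 0 := by
  have hfix := hf (unipotent t)
  simp only [map_add, map_mul, hρ.map_pairing_unipotent, hρ.map_π] at hfix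
  have hπf : X (idxπ k) * (ρ (unipotent t) f - (f - C t * X 0)) = 0 := by
    linear_combination hfix
  exact sub_eq_zero.mp ((mul_eq_zero.mp hπf).resolve_left (X_ne_zero _))

theorem aeval_single_map_unipotent (hρ : IsTripleAction ρ) (t : K) (f : MvPolynomial (Fin 11) K) :
    aeval (Pi.single 0 1) (ρ (unipotent t) f)
      = aeval (Pi.single 0 1 + t ^ 2 • Pi.single 1 1) f := by
  have hμ := hρ.map_μ (unipotent t)
  have hν := hρ.map_ν (unipotent t)
  have hπ := hρ.map_π (unipotent t)
  simp only [Fin.forall_fin_succ, Matrix.cons_val_zero, Matrix.cons_val_succ] at hμ hν hπ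
  rw [← AlgEquiv.coe_toAlgHom, ← AlgHom.comp_apply]
  congr 1
  ext i
  fin_cases i <;> simp [hρ.map_u, hρ.map_v, hμ, hν, hπ]

theorem pairing_add_X_mul_not_mem [CharP K 2] [Infinite K] (hρ : IsTripleAction ρ) (k : Fin 3)
    (f : MvPolynomial (Fin 11) K) : pairing k + X (idxπ k) * f ∉ fixedPointsSubalgebra ρ :=
  fun hf => not_forall_aeval_add_sq_smul_eq_sub f _ _ (aeval (Pi.single 0 1) f) fun t => by
    rw [← hρ.aeval_single_map_unipotent, hρ.map_unipotent_of_pairing_add_X_mul_mem hf]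
    simp

end IsTripleAction

end SL2Triples

/-- Let `K` be algebraically closed of characteristic `2` and let `SL₂(K)`
act on `R = K[u,v,μ₁,ν₁,π₁,μ₂,ν₂,π₂,μ₃,ν₃,π₃]` (variables `X 0, …, X 10`) by `K`-algebra
automorphisms with `σ·u = a²u + c²v`, `σ·v = b²u + d²v`, `σ·μᵢ = d²μᵢ + b²νᵢ + bd·πᵢ`,
`σ·νᵢ = c²μᵢ + a²νᵢ + ac·πᵢ`, `σ·πᵢ = πᵢ`.  Then `π₁, π₂, π₃` are invariant but do not form a
regular sequence in the invariant ring `R^{SL₂(K)}`. -/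
theorem stmt14 {K : Type*} [Field K] [IsAlgClosed K] [CharP K 2]
    (ρ : Matrix.SpecialLinearGroup (Fin 2) K →*
      (MvPolynomial (Fin 11) K ≃ₐ[K] MvPolynomial (Fin 11) K))
    (h_u : ∀ σ : Matrix.SpecialLinearGroup (Fin 2) K,
      ρ σ (X 0) = C (σ 0 0 ^ 2) * X 0 + C (σ 1 0 ^ 2) * X 1)
    (h_v : ∀ σ : Matrix.SpecialLinearGroup (Fin 2) K,
      ρ σ (X 1) = C (σ 0 1 ^ 2) * X 0 + C (σ 1 1 ^ 2) * X 1)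
    (h_μ1 : ∀ σ : Matrix.SpecialLinearGroup (Fin 2) K,
      ρ σ (X 2) = C (σ 1 1 ^ 2) * X 2 + C (σ 0 1 ^ 2) * X 3 + C (σ 0 1 * σ 1 1) * X 4)
    (h_ν1 : ∀ σ : Matrix.SpecialLinearGroup (Fin 2) K,
      ρ σ (X 3) = C (σ 1 0 ^ 2) * X 2 + C (σ 0 0 ^ 2) * X 3 + C (σ 0 0 * σ 1 0) * X 4)
    (h_π1 : ∀ σ : Matrix.SpecialLinearGroup (Fin 2) K, ρ σ (X 4) = X 4)
    (h_μ2 : ∀ σ : Matrix.SpecialLinearGroup (Fin 2) K,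
      ρ σ (X 5) = C (σ 1 1 ^ 2) * X 5 + C (σ 0 1 ^ 2) * X 6 + C (σ 0 1 * σ 1 1) * X 7)
    (h_ν2 : ∀ σ : Matrix.SpecialLinearGroup (Fin 2) K,
      ρ σ (X 6) = C (σ 1 0 ^ 2) * X 5 + C (σ 0 0 ^ 2) * X 6 + C (σ 0 0 * σ 1 0) * X 7)
    (h_π2 : ∀ σ : Matrix.SpecialLinearGroup (Fin 2) K, ρ σ (X 7) = X 7)
    (h_μ3 : ∀ σ : Matrix.SpecialLinearGroup (Fin 2) K,
      ρ σ (X 8) = C (σ 1 1 ^ 2) * X 8 + C (σ 0 1 ^ 2) * X 9 + C (σ 0 1 * σ 1 1) * X 10)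
    (h_ν3 : ∀ σ : Matrix.SpecialLinearGroup (Fin 2) K,
      ρ σ (X 9) = C (σ 1 0 ^ 2) * X 8 + C (σ 0 0 ^ 2) * X 9 + C (σ 0 0 * σ 1 0) * X 10)
    (h_π3 : ∀ σ : Matrix.SpecialLinearGroup (Fin 2) K, ρ σ (X 10) = X 10) :
    (∀ σ : Matrix.SpecialLinearGroup (Fin 2) K,
      ρ σ (X 4) = X 4 ∧ ρ σ (X 7) = X 7 ∧ ρ σ (X 10) = X 10) ∧
    ¬ IsRegSeq
      (![⟨X 4, (mem_fixedPointsSubalgebra _ _).mpr h_π1⟩,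
          ⟨X 7, (mem_fixedPointsSubalgebra _ _).mpr h_π2⟩,
          ⟨X 10, (mem_fixedPointsSubalgebra _ _).mpr h_π3⟩] :
        Fin 3 → fixedPointsSubalgebra
          (fun σ : Matrix.SpecialLinearGroup (Fin 2) K => ρ σ)) := by
  have hρ : SL2Triples.IsTripleAction fun σ => ρ σ :=
    { map_u := h_u
      map_v := h_v
      map_μ := fun σ k => by fin_cases k; exacts [h_μ1 σ, h_μ2 σ, h_μ3 σ]
      map_ν := fun σ k => by fin_cases k; exacts [h_ν1 σ, h_ν2 σ, h_ν3 σ]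
      map_π := fun σ k => by fin_cases k; exacts [h_π1 σ, h_π2 σ, h_π3 σ] }
  refine ⟨fun σ => ⟨h_π1 σ, h_π2 σ, h_π3 σ⟩, fun hreg => ?_⟩
  have hcancel := hreg.mem_span_pair_of_mul_mem (g := ⟨SL2Triples.cross 0 1, hρ.cross_mem 0 1⟩)
  obtain ⟨A, B, hAB⟩ := Ideal.mem_span_pair.mp <| hcancel <| Ideal.mem_span_pair.mpr
    ⟨⟨SL2Triples.cross 1 2, hρ.cross_mem 1 2⟩, ⟨SL2Triples.cross 0 2, hρ.cross_mem 0 2⟩,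
      Subtype.ext (SL2Triples.cross_mul_add_cross_mul 0 1 2)⟩
  obtain ⟨f, hf⟩ := MvPolynomial.exists_eq_add_X_mul_of_mul_X_add_mul_X_eq (by decide)
    ((congrArg Subtype.val hAB).trans (add_comm _ _))
  exact hρ.pairing_add_X_mul_not_mem 1 f (hf ▸ A.2)
end

section
/- Let K be an algebraically closed field of characteristic p > 0, let q = p^m for some m ≥ 1, and regard the finite field 𝔽_q as an additive subgroup of K. Let G = (𝔽_q, +) act on the polynomial ring R = K[π₁, τ₁, π₂, τ₂, π₃, τ₃] by K-algebra automorphisms via σ·π_i = π_i and σ·τ_i = τ_i + σ·π_i for σ ∈ 𝔽_q ⊆ K and i = 1, 2, 3. Then π₁, π₂, π₃ are G-invariant, but π₁, π₂, π₃ is not a regular sequence in the invariant ring R^G. -/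
open MvPolynomial

noncomputable def ee (K : Type*) [CommSemiring K] : MvPolynomial (Fin 6) K →ₐ[K] K :=
  aeval (fun _ => 0)

@[simp] theorem ee_X {K : Type*} [CommSemiring K] (i : Fin 6) : ee K (X i) = 0 := by
  simp [ee]

theorem ee_fix {K : Type*} [CommRing K]
    (g : MvPolynomial (Fin 6) K ≃ₐ[K] MvPolynomial (Fin 6) K)
    (h0 : g (X 0) = X 0) (h1 : g (X 1) = X 1 + X 0) (h2 : g (X 2) = X 2)
    (h3 : g (X 3) = X 3 + X 2) (h4 : g (X 4) = X 4) (h5 : g (X 5) = X 5 + X 4)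
    (f : MvPolynomial (Fin 6) K) : ee K (g f) = ee K f := by
  have : (ee K).comp g.toAlgHom = ee K := by
    apply MvPolynomial.algHom_ext
    intro i
    fin_cases i <;>
      simp [h0, h1, h2, h3, h4, h5]
  exact congrFun (congrArg DFunLike.coe this) f

theorem ee_key {K : Type*} [CommRing K]
    (g : MvPolynomial (Fin 6) K ≃ₐ[K] MvPolynomial (Fin 6) K)
    (h0 : g (X 0) = X 0) (h1 : g (X 1) = X 1 + X 0) (h2 : g (X 2) = X 2)
    (h3 : g (X 3) = X 3 + X 2) (h4 : g (X 4) = X 4) (h5 : g (X 5) = X 5 + X 4)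
    (f : MvPolynomial (Fin 6) K) :
    ee K (pderiv 2 (g f)) = ee K (pderiv 2 f) + ee K (pderiv 3 f) := by
  induction f using MvPolynomial.induction_on with
  | C c =>
      have : g (C c) = C c := by
        rw [← MvPolynomial.algebraMap_eq]; exact g.commutes c
      simp [this, pderiv_C]
  | add p q hp hq => simp only [map_add, hp, hq]; ring
  | mul_X f i hf =>
      rw [map_mul, pderiv_mul, pderiv_mul, pderiv_mul]
      simp only [map_add, map_mul]
      rw [ee_fix g h0 h1 h2 h3 h4 h5 f]
      fin_cases i <;>
        simp [h0, h1, h2, h3, h4, h5, hf, pderiv_X_self, pderiv_X_of_ne, map_add]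

/-- Let `K` be algebraically closed of characteristic `p > 0`, `q = p^m`
with `m ≥ 1`, and regard `𝔽_q` as the additive subgroup `{σ : K | σ^q = σ}` of `K`.  Let
`G = (𝔽_q, +)` act on `R = K[π₁,τ₁,π₂,τ₂,π₃,τ₃]` (variables `X 0, …, X 5` with `πᵢ = X (2i)`
and `τᵢ = X (2i+1)`) by `K`-algebra automorphisms via `σ·πᵢ = πᵢ` and `σ·τᵢ = τᵢ + σ·πᵢ`.
Then `π₁, π₂, π₃` are `G`-invariant but do not form a regular sequence in the invariant ring
`R^G`. -/
theorem stmt19 {K : Type*} [Field K] [IsAlgClosed K] (p : ℕ) [CharP K p] (hp : 0 < p)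
    (m : ℕ) (hm : 1 ≤ m)
    (ρ : K → (MvPolynomial (Fin 6) K ≃ₐ[K] MvPolynomial (Fin 6) K))
    (hhom : ∀ σ τ : K, σ ^ p ^ m = σ → τ ^ p ^ m = τ → ρ (σ + τ) = ρ σ * ρ τ)
    (h_π1 : ∀ σ : K, σ ^ p ^ m = σ → ρ σ (X 0) = X 0)
    (h_τ1 : ∀ σ : K, σ ^ p ^ m = σ → ρ σ (X 1) = X 1 + C σ * X 0)
    (h_π2 : ∀ σ : K, σ ^ p ^ m = σ → ρ σ (X 2) = X 2)
    (h_τ2 : ∀ σ : K, σ ^ p ^ m = σ → ρ σ (X 3) = X 3 + C σ * X 2)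
    (h_π3 : ∀ σ : K, σ ^ p ^ m = σ → ρ σ (X 4) = X 4)
    (h_τ3 : ∀ σ : K, σ ^ p ^ m = σ → ρ σ (X 5) = X 5 + C σ * X 4) :
    ¬ IsRegSeq
      (![⟨X 0, (mem_fixedPointsSubalgebra _ _).mpr fun σ => h_π1 σ.1 σ.2⟩,
          ⟨X 2, (mem_fixedPointsSubalgebra _ _).mpr fun σ => h_π2 σ.1 σ.2⟩,
          ⟨X 4, (mem_fixedPointsSubalgebra _ _).mpr fun σ => h_π3 σ.1 σ.2⟩] :
        Fin 3 → fixedPointsSubalgebra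
          (fun σ : {σ : K // σ ^ p ^ m = σ} => ρ σ.1)) := by
  intro hreg
  classical
  have h1 : (1:K) ^ p ^ m = 1 := one_pow _
  set G := {σ : K // σ ^ p ^ m = σ} with hG
  set S := fixedPointsSubalgebra (fun σ : G => ρ σ.1) with hS
  set F : Fin 3 → S :=
    (![⟨X 0, (mem_fixedPointsSubalgebra _ _).mpr fun σ => h_π1 σ.1 σ.2⟩,
        ⟨X 2, (mem_fixedPointsSubalgebra _ _).mpr fun σ => h_π2 σ.1 σ.2⟩,
        ⟨X 4, (mem_fixedPointsSubalgebra _ _).mpr fun σ => h_π3 σ.1 σ.2⟩]) with hF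
  obtain ⟨-, hreg2⟩ := hreg
  -- the invariant element u
  have hu_inv : ∀ σ : G, ρ σ.1 (X 0 * X 3 - X 2 * X 1) = X 0 * X 3 - X 2 * X 1 := by
    intro σ
    simp only [map_sub, map_mul, h_π1 σ.1 σ.2, h_τ1 σ.1 σ.2, h_π2 σ.1 σ.2, h_τ2 σ.1 σ.2]
    ring
  have hw1_inv : ∀ σ : G, ρ σ.1 (X 3 * X 4 - X 2 * X 5) = X 3 * X 4 - X 2 * X 5 := by
    intro σ
    simp only [map_sub, map_mul, h_π2 σ.1 σ.2, h_τ2 σ.1 σ.2, h_π3 σ.1 σ.2, h_τ3 σ.1 σ.2]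
    ring
  have hw2_inv : ∀ σ : G, ρ σ.1 (X 0 * X 5 - X 1 * X 4) = X 0 * X 5 - X 1 * X 4 := by
    intro σ
    simp only [map_sub, map_mul, h_π1 σ.1 σ.2, h_τ1 σ.1 σ.2, h_π3 σ.1 σ.2, h_τ3 σ.1 σ.2]
    ring
  set gS : S := ⟨X 0 * X 3 - X 2 * X 1, (mem_fixedPointsSubalgebra _ _).mpr hu_inv⟩ with hgS
  set w1 : S := ⟨X 3 * X 4 - X 2 * X 5, (mem_fixedPointsSubalgebra _ _).mpr hw1_inv⟩ with hw1
  set w2 : S := ⟨X 0 * X 5 - X 1 * X 4, (mem_fixedPointsSubalgebra _ _).mpr hw2_inv⟩ with hw2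
  have hmem : gS * F 2 ∈ Ideal.span (F '' {j : Fin 3 | j < 2}) := by
    have e0 : (F 0 : S) ∈ F '' {j : Fin 3 | j < 2} := ⟨0, by decide, rfl⟩
    have e1 : (F 1 : S) ∈ F '' {j : Fin 3 | j < 2} := ⟨1, by decide, rfl⟩
    have key : gS * F 2 = w1 * F 0 + w2 * F 1 := by
      apply Subtype.ext
      show (X 0 * X 3 - X 2 * X 1) * X 4 =
        (X 3 * X 4 - X 2 * X 5) * X 0 + (X 0 * X 5 - X 1 * X 4) * X 2
      ring
    rw [key]
    exact Ideal.add_mem _ (Ideal.mul_mem_left _ _ (Ideal.subset_span e0))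
      (Ideal.mul_mem_left _ _ (Ideal.subset_span e1))
  have hg := hreg2 2 gS hmem
  have himg : F '' {j : Fin 3 | j < 2} = {F 0, F 1} := by
    ext x
    constructor
    · rintro ⟨j, hj, rfl⟩
      fin_cases j
      · exact Or.inl rfl
      · exact Or.inr rfl
      · exact absurd hj (by decide)
    · rintro (rfl | rfl)
      · exact ⟨0, by decide, rfl⟩
      · exact ⟨1, by decide, rfl⟩
  rw [himg] at hg
  obtain ⟨a, b, hab⟩ := Ideal.mem_span_pair.mp hg
  have habR : (a : MvPolynomial (Fin 6) K) * X 0 + (b : MvPolynomial (Fin 6) K) * X 2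
      = X 0 * X 3 - X 2 * X 1 := congrArg Subtype.val hab
  -- the automorphism with σ = 1
  have g0 : ρ 1 (X 0) = X 0 := h_π1 1 h1
  have g1 : ρ 1 (X 1) = X 1 + X 0 := by rw [h_τ1 1 h1]; simp
  have g2 : ρ 1 (X 2) = X 2 := h_π2 1 h1
  have g3 : ρ 1 (X 3) = X 3 + X 2 := by rw [h_τ2 1 h1]; simp
  have g4 : ρ 1 (X 4) = X 4 := h_π3 1 h1
  have g5 : ρ 1 (X 5) = X 5 + X 4 := by rw [h_τ3 1 h1]; simp
  have ha_inv : ρ 1 (a : MvPolynomial (Fin 6) K) = a := a.2 ⟨1, h1⟩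
  have hkey := ee_key (ρ 1) g0 g1 g2 g3 g4 g5 (a : MvPolynomial (Fin 6) K)
  rw [ha_inv] at hkey
  have h3a : ee K (pderiv 3 (a : MvPolynomial (Fin 6) K)) = 0 := (left_eq_add.mp hkey)
  have hcontra := congrArg (fun f => ee K (pderiv 0 (pderiv 3 f))) habR
  simp only [map_add, map_sub, pderiv_mul, map_mul, pderiv_X_self,
    pderiv_X_of_ne (show (0:Fin 6) ≠ 3 by decide), pderiv_X_of_ne (show (2:Fin 6) ≠ 3 by decide),
    pderiv_X_of_ne (show (1:Fin 6) ≠ 3 by decide), pderiv_X_of_ne (show (2:Fin 6) ≠ 0 by decide),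
    pderiv_X_of_ne (show (1:Fin 6) ≠ 0 by decide), pderiv_X_of_ne (show (3:Fin 6) ≠ 0 by decide),
    mul_one, mul_zero, zero_mul, add_zero, zero_add, sub_zero, zero_sub, ee_X, map_one,
    pderiv_one, map_zero] at hcontra
  rw [h3a] at hcontra
  simp at hcontra
end
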